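/- arXiv:1909.11694 — 6 statements merged into one kernel-verified Lean document; each statement's English description precedes it below -/
import Mathlib

section
/- Let G be a connected graph on n ≥ 2 vertices with adjacency matrix A, let j be a vertex of G, and let s* ∈ {−1,1}ⁿ be the vector with s*_j = −1 and s*_i = 1 for all i ≠ j. Then λ₂(A + I) < λ₁(A + diag(s*)), i.e., the second-largest eigenvalue of G with a loop of weight +1 at every vertex is strictly less than the largest eigenvalue of G with a loop of weight −1 at j and loops of weight +1 at all other vertices. -/
open scoped Classical

/-- Ascending list of eigenvalues of a real symmetric matrix. -/
noncomputable def eigList {V : Type*} [Fintype V] [DecidableEq V]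
    (A : Matrix V V ℝ) : List ℝ :=
  if h : A.IsHermitian then (Finset.univ.val.map h.eigenvalues).sort (· ≤ ·) else []

/-- The largest eigenvalue of a real symmetric `n × n` matrix. -/
noncomputable def maxEig {n : ℕ} (A : Matrix (Fin n) (Fin n) ℝ) : ℝ :=
  (eigList A).getD (n - 1) 0

/-- The second largest eigenvalue of a real symmetric `n × n` matrix. -/
noncomputable def secondMaxEig {n : ℕ} (A : Matrix (Fin n) (Fin n) ℝ) : ℝ :=
  (eigList A).getD (n - 2) 0

/-!
Suppose `λ₂(A + I) ≥ λ₁(B)` with `B = A + diag s*`. The span of the two top eigenvectors of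
`A + I` contains a nonzero `x` with `x j = 0`, and on such vectors the quadratic forms of `A + I`
and `B` agree, so `x` attains the Rayleigh maximum `λ₁(B)` of `B`. As `B` has nonnegative
off-diagonal entries, `|x|` attains it as well and is therefore an eigenvector of `B`. In the
eigenvalue equation at a zero coordinate of `|x|` all terms are nonnegative, so the neighbours'
coordinates vanish too; by connectivity `|x| = 0`, a contradiction.
-/

open Matrix

theorem eigList_eq_reverse_ofFn {V : Type*} [Fintype V] [DecidableEq V] {M : Matrix V V ℝ}
    (hM : M.IsHermitian) : eigList M = (List.ofFn hM.eigenvalues₀).reverse := by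
  have hmap : Finset.univ.val.map hM.eigenvalues = ↑(List.ofFn hM.eigenvalues₀) := by
    have h := hM.roots_charpoly_eq_eigenvalues.symm.trans hM.roots_charpoly_eq_eigenvalues₀
    rwa [RCLike.ofReal_real_eq_id, Function.id_comp, Function.id_comp, Fin.univ_val_map] at h
  rw [eigList, dif_pos hM, hmap, ← Multiset.coe_reverse, Multiset.coe_sort]
  apply List.mergeSort_of_pairwise
  rw [List.pairwise_reverse]
  simpa [flip, List.sortedGE_iff_pairwise] using hM.eigenvalues₀_antitone.sortedGE_ofFn

theorem getD_eigList {m : ℕ} {M : Matrix (Fin m) (Fin m) ℝ} (hM : M.IsHermitian) {k : ℕ}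
    (hk : k < m) :
    (eigList M).getD k 0 = hM.eigenvalues₀ ⟨m - 1 - k, by simp; omega⟩ := by
  rw [eigList_eq_reverse_ofFn hM, List.getD_eq_getElem _ _ (by simpa using hk),
    List.getElem_reverse, List.getElem_ofFn]
  congr 2
  simp

theorem SimpleGraph.Preconnected.forall_of_forall_adj {V : Type*} {G : SimpleGraph V}
    (hG : G.Preconnected) {p : V → Prop} (hp : ∀ u v, G.Adj u v → p u → p v) {j : V}
    (hj : p j) (v : V) : p v := by
  obtain ⟨w⟩ := hG j v
  induction w with
  | nil => exact hj
  | cons h _ ih => exact ih (hp _ _ h hj)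

namespace Matrix

theorem mulVec_dotProduct_mulVec_mulVec {ι R : Type*} [Fintype ι] [CommSemiring R]
    (U M : Matrix ι ι R) (z w : ι → R) :
    (U *ᵥ z) ⬝ᵥ (M *ᵥ (U *ᵥ w)) = z ⬝ᵥ ((Uᵀ * M * U) *ᵥ w) := by
  rw [← mulVec_mulVec, ← mulVec_mulVec, dotProduct_mulVec z Uᵀ, vecMul_transpose]

theorem dotProduct_add_diagonal_mulVec_congr {ι R : Type*} [Fintype ι] [DecidableEq ι]
    [CommSemiring R] (A : Matrix ι ι R) {d d' : ι → R} {x : ι → R}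
    (h : ∀ i, x i ≠ 0 → d i = d' i) :
    x ⬝ᵥ ((A + diagonal d) *ᵥ x) = x ⬝ᵥ ((A + diagonal d') *ᵥ x) := by
  rw [add_mulVec, add_mulVec, dotProduct_add, dotProduct_add]
  congr 1
  simp only [dotProduct, mulVec_diagonal]
  refine Finset.sum_congr rfl fun i _ => ?_
  by_cases hi : x i = 0
  · simp [hi]
  · rw [h i hi]

namespace IsHermitian

variable {ι : Type*} [Fintype ι] [DecidableEq ι] {M : Matrix ι ι ℝ}

theorem transpose_eigenvectorUnitary_mul_mul (hM : M.IsHermitian) :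
    (hM.eigenvectorUnitary : Matrix ι ι ℝ)ᵀ * M * hM.eigenvectorUnitary =
      diagonal hM.eigenvalues := by
  rw [← conjTranspose_eq_transpose_of_trivial, ← star_eq_conjTranspose]
  simpa [Unitary.conjStarAlgAut_star_apply] using hM.conjStarAlgAut_star_eigenvectorUnitary

theorem transpose_eigenvectorUnitary_mul_self (hM : M.IsHermitian) :
    (hM.eigenvectorUnitary : Matrix ι ι ℝ)ᵀ * hM.eigenvectorUnitary = 1 := by
  rw [← conjTranspose_eq_transpose_of_trivial, ← star_eq_conjTranspose]
  exact Unitary.coe_star_mul_self _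

theorem eigenvectorUnitary_mul_transpose_self (hM : M.IsHermitian) :
    (hM.eigenvectorUnitary : Matrix ι ι ℝ) * (hM.eigenvectorUnitary : Matrix ι ι ℝ)ᵀ = 1 := by
  rw [← conjTranspose_eq_transpose_of_trivial, ← star_eq_conjTranspose]
  exact Unitary.coe_mul_star_self _

theorem eigenvectorUnitary_mulVec_dotProduct_mulVec (hM : M.IsHermitian) (z w : ι → ℝ) :
    ((hM.eigenvectorUnitary : Matrix ι ι ℝ) *ᵥ z) ⬝ᵥ
        (M *ᵥ ((hM.eigenvectorUnitary : Matrix ι ι ℝ) *ᵥ w)) =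
      z ⬝ᵥ (diagonal hM.eigenvalues *ᵥ w) := by
  rw [mulVec_dotProduct_mulVec_mulVec, hM.transpose_eigenvectorUnitary_mul_mul]

theorem eigenvectorUnitary_mulVec_dotProduct (hM : M.IsHermitian) (z w : ι → ℝ) :
    ((hM.eigenvectorUnitary : Matrix ι ι ℝ) *ᵥ z) ⬝ᵥ
        ((hM.eigenvectorUnitary : Matrix ι ι ℝ) *ᵥ w) = z ⬝ᵥ w := by
  simpa [hM.transpose_eigenvectorUnitary_mul_self] using
    mulVec_dotProduct_mulVec_mulVec (hM.eigenvectorUnitary : Matrix ι ι ℝ) 1 z w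

theorem dotProduct_mulVec_le_mul_dotProduct (hM : M.IsHermitian) {μ : ℝ}
    (hμ : ∀ i, hM.eigenvalues i ≤ μ) (v : ι → ℝ) : v ⬝ᵥ (M *ᵥ v) ≤ μ * (v ⬝ᵥ v) := by
  set U : Matrix ι ι ℝ := (hM.eigenvectorUnitary : Matrix ι ι ℝ)
  obtain ⟨w, rfl⟩ : ∃ w, U *ᵥ w = v :=
    ⟨Uᵀ *ᵥ v, by rw [mulVec_mulVec, hM.eigenvectorUnitary_mul_transpose_self, one_mulVec]⟩
  rw [hM.eigenvectorUnitary_mulVec_dotProduct_mulVec, hM.eigenvectorUnitary_mulVec_dotProduct,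
    dotProduct, dotProduct, Finset.mul_sum]
  refine Finset.sum_le_sum fun i _ => ?_
  rw [mulVec_diagonal]
  nlinarith [hμ i, mul_self_nonneg (w i)]

theorem exists_ne_zero_apply_eq_zero_mul_dotProduct_le (hM : M.IsHermitian) {i₁ i₂ : ι}
    (hne : i₁ ≠ i₂) {μ : ℝ} (h₁ : μ ≤ hM.eigenvalues i₁) (h₂ : μ ≤ hM.eigenvalues i₂) (j : ι) :
    ∃ x : ι → ℝ, x ≠ 0 ∧ x j = 0 ∧ μ * (x ⬝ᵥ x) ≤ x ⬝ᵥ (M *ᵥ x) := by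
  set U : Matrix ι ι ℝ := (hM.eigenvectorUnitary : Matrix ι ι ℝ)
  obtain ⟨a, b, hab, habj⟩ : ∃ a b : ℝ, (a ≠ 0 ∨ b ≠ 0) ∧ a * U j i₁ + b * U j i₂ = 0 := by
    by_cases hc : U j i₁ = 0
    · exact ⟨1, 0, .inl one_ne_zero, by simp [hc]⟩
    · exact ⟨U j i₂, -U j i₁, .inr (neg_ne_zero.mpr hc), by ring⟩
  set z : ι → ℝ := Pi.single i₁ a + Pi.single i₂ b
  have hz₁ : z i₁ = a := by simp [z, hne.symm]
  have hz₂ : z i₂ = b := by simp [z, hne]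
  have hz : z ≠ 0 := fun h => by simp [← hz₁, ← hz₂, h] at hab
  refine ⟨U *ᵥ z, ?_, ?_, ?_⟩
  · rw [ne_eq, ← dotProduct_self_eq_zero, hM.eigenvectorUnitary_mulVec_dotProduct,
      dotProduct_self_eq_zero]
    exact hz
  · simpa [z, mulVec_add, mulVec_single, mul_comm] using habj
  · rw [hM.eigenvectorUnitary_mulVec_dotProduct_mulVec, hM.eigenvectorUnitary_mulVec_dotProduct,
      dotProduct, dotProduct, Finset.mul_sum]
    refine Finset.sum_le_sum fun i _ => ?_
    rw [mulVec_diagonal]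
    have : μ ≤ hM.eigenvalues i ∨ z i = 0 := by
      by_cases hi₁ : i = i₁
      · exact .inl (hi₁ ▸ h₁)
      by_cases hi₂ : i = i₂
      · exact .inl (hi₂ ▸ h₂)
      · exact .inr (by simp [z, hi₁, hi₂])
    rcases this with h | h
    · nlinarith [mul_self_nonneg (z i)]
    · simp [h]

end IsHermitian

variable {ι : Type*} [Fintype ι] {M : Matrix ι ι ℝ}

theorem IsHermitian.mulVec_eq_smul_of_dotProduct_mulVec_eq (hM : M.IsHermitian) {μ : ℝ}
    (hμ : ∀ v, v ⬝ᵥ (M *ᵥ v) ≤ μ * (v ⬝ᵥ v)) {x : ι → ℝ}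
    (hx : x ⬝ᵥ (M *ᵥ x) = μ * (x ⬝ᵥ x)) : M *ᵥ x = μ • x := by
  have hgap : ∀ v, (μ • 1 - M) *ᵥ v = μ • v - M *ᵥ v := fun v => by
    rw [sub_mulVec, smul_mulVec, one_mulVec]
  have hpsd : (μ • 1 - M).PosSemidef := by
    refine .of_dotProduct_mulVec_nonneg
      ((isHermitian_one.smul (IsSelfAdjoint.all μ)).sub hM) fun v => ?_
    rw [star_trivial, hgap, dotProduct_sub, dotProduct_smul, smul_eq_mul, sub_nonneg]
    exact hμ v
  have hker := (hpsd.dotProduct_mulVec_zero_iff x).mp <| by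
    rw [star_trivial, hgap, dotProduct_sub, dotProduct_smul, smul_eq_mul, hx, sub_self]
  rw [hgap, sub_eq_zero] at hker
  exact hker.symm

theorem dotProduct_mulVec_le_abs (hM : ∀ i k, i ≠ k → 0 ≤ M i k) (x : ι → ℝ) :
    x ⬝ᵥ (M *ᵥ x) ≤ |x| ⬝ᵥ (M *ᵥ |x|) := by
  simp only [dotProduct, mulVec, Finset.mul_sum, Pi.abs_apply]
  refine Finset.sum_le_sum fun i _ => Finset.sum_le_sum fun k _ => ?_
  by_cases hik : i = k
  · subst hik
    rw [mul_left_comm, ← abs_mul_abs_self (x i), mul_left_comm]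
  · calc x i * (M i k * x k) ≤ |x i * (M i k * x k)| := le_abs_self _
      _ = |x i| * (M i k * |x k|) := by rw [abs_mul, abs_mul, abs_of_nonneg (hM i k hik)]

theorem eq_zero_of_mulVec_eq_smul_of_apply_eq_zero {G : SimpleGraph ι} (hG : G.Preconnected)
    (hM : ∀ i k, i ≠ k → 0 ≤ M i k) (hMG : ∀ i k, G.Adj i k → 0 < M i k) {μ : ℝ} {y : ι → ℝ}
    (hy : 0 ≤ y) (hMy : M *ᵥ y = μ • y) {j : ι} (hyj : y j = 0) : y = 0 := by
  refine funext (hG.forall_of_forall_adj (fun i k hik hyi => ?_) hyj)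
  have hrow : ∑ k', M i k' * y k' = 0 := by
    simpa [mulVec, dotProduct, hyi] using congrFun hMy i
  have hterm : ∀ k' ∈ Finset.univ, 0 ≤ M i k' * y k' := fun k' _ => by
    by_cases h : i = k'
    · simp [← h, hyi]
    · exact mul_nonneg (hM i k' h) (hy k')
  have := (Finset.sum_eq_zero_iff_of_nonneg hterm).mp hrow k (Finset.mem_univ k)
  exact (mul_eq_zero.mp this).resolve_left (hMG i k hik).ne'

end Matrix

theorem SimpleGraph.Preconnected.eq_zero_of_dotProduct_mulVec_eq_of_apply_eq_zero
    {V : Type*} [Fintype V] [DecidableEq V] {G : SimpleGraph V} [DecidableRel G.Adj]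
    (hG : G.Preconnected) {d : V → ℝ} {μ : ℝ}
    (hμ : ∀ v, v ⬝ᵥ ((G.adjMatrix ℝ + diagonal d) *ᵥ v) ≤ μ * (v ⬝ᵥ v)) {x : V → ℝ}
    (hx : x ⬝ᵥ ((G.adjMatrix ℝ + diagonal d) *ᵥ x) = μ * (x ⬝ᵥ x)) {j : V} (hxj : x j = 0) :
    x = 0 := by
  set M := G.adjMatrix ℝ + diagonal d
  have hoff : ∀ i k, i ≠ k → M i k = G.adjMatrix ℝ i k := fun i k hik => by
    simp [M, diagonal_apply_ne _ hik]
  have hM : ∀ i k, i ≠ k → 0 ≤ M i k := fun i k hik => by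
    rw [hoff i k hik, SimpleGraph.adjMatrix_apply]; split_ifs <;> norm_num
  have hMG : ∀ i k, G.Adj i k → 0 < M i k := fun i k hik => by
    rw [hoff i k hik.ne, SimpleGraph.adjMatrix_apply, if_pos hik]; exact one_pos
  have habs : |x| ⬝ᵥ (M *ᵥ |x|) = μ * (|x| ⬝ᵥ |x|) := by
    have hnorm : |x| ⬝ᵥ |x| = x ⬝ᵥ x := by simp [dotProduct, Pi.abs_apply, abs_mul_abs_self]
    exact le_antisymm (hμ |x|) (hnorm ▸ hx ▸ dotProduct_mulVec_le_abs hM x)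
  have hMabs := ((G.isHermitian_adjMatrix ℝ).add (isHermitian_diagonal d)
    ).mulVec_eq_smul_of_dotProduct_mulVec_eq hμ habs
  have := eq_zero_of_mulVec_eq_smul_of_apply_eq_zero hG hM hMG (abs_nonneg x) hMabs
    (j := j) (by simp [hxj])
  exact funext fun i => abs_eq_zero.mp (congrFun this i)

section MaxEig

variable {m : ℕ} {M : Matrix (Fin m) (Fin m) ℝ}

theorem eigenvalues_le_maxEig (hM : M.IsHermitian) (i : Fin m) :
    hM.eigenvalues i ≤ maxEig M := by
  have hm : 0 < m := Fin.pos i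
  rw [maxEig, getD_eigList hM (by omega)]
  exact hM.eigenvalues₀_antitone (Fin.le_def.mpr (by simp))

theorem exists_ne_secondMaxEig_le_eigenvalues (hM : M.IsHermitian) (hm : 2 ≤ m) :
    ∃ i₁ i₂, i₁ ≠ i₂ ∧ secondMaxEig M ≤ hM.eigenvalues i₁ ∧
      secondMaxEig M ≤ hM.eigenvalues i₂ := by
  -- the reindexing through which `eigenvalues` is defined from the sorted `eigenvalues₀`
  let e : Fin (Fintype.card (Fin m)) ≃ Fin m := Fintype.equivOfCardEq (Fintype.card_fin _)
  have hle : ∀ k : Fin (Fintype.card (Fin m)), k.val ≤ 1 →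
      secondMaxEig M ≤ hM.eigenvalues (e k) := by
    intro k hk
    rw [secondMaxEig, getD_eigList hM (by omega)]
    exact hM.eigenvalues₀_antitone (Fin.le_def.mpr (by simp [e]; omega))
  have hcard : 1 < Fintype.card (Fin m) := by rw [Fintype.card_fin]; omega
  exact ⟨e ⟨0, by omega⟩, e ⟨1, hcard⟩, by simp [e], hle _ zero_le_one, hle _ le_rfl⟩

theorem dotProduct_mulVec_le_maxEig (hM : M.IsHermitian) (v : Fin m → ℝ) :
    v ⬝ᵥ (M *ᵥ v) ≤ maxEig M * (v ⬝ᵥ v) :=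
  hM.dotProduct_mulVec_le_mul_dotProduct (eigenvalues_le_maxEig hM) v

theorem exists_ne_zero_apply_eq_zero_secondMaxEig_le (hM : M.IsHermitian) (hm : 2 ≤ m)
    (j : Fin m) : ∃ x : Fin m → ℝ, x ≠ 0 ∧ x j = 0 ∧
      secondMaxEig M * (x ⬝ᵥ x) ≤ x ⬝ᵥ (M *ᵥ x) := by
  obtain ⟨i₁, i₂, hne, h₁, h₂⟩ := exists_ne_secondMaxEig_le_eigenvalues hM hm
  exact hM.exists_ne_zero_apply_eq_zero_mul_dotProduct_le hne h₁ h₂ j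

end MaxEig

/-- Let `G` be a connected graph on `n ≥ 2` vertices with adjacency matrix `A`, let `j`
be a vertex, and let `s*` have a `−1` at `j` and `+1` everywhere else.  Then
`λ₂(A + I) < λ₁(A + diag s*)`. -/
theorem secondMaxEig_lt_maxEig_oneNeg {n : ℕ} (hn : 2 ≤ n)
    (G : SimpleGraph (Fin n)) (hG : G.Connected) (j : Fin n) :
    secondMaxEig (G.adjMatrix ℝ + 1) <
      maxEig (G.adjMatrix ℝ +
        Matrix.diagonal (fun i => if i = j then (-1 : ℝ) else 1)) := by
  set s : Fin n → ℝ := fun i => if i = j then -1 else 1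
  set A := G.adjMatrix ℝ
  have hA : A.IsHermitian := G.isHermitian_adjMatrix ℝ
  by_contra! hle
  obtain ⟨x, hx0, hxj, hlow⟩ :=
    exists_ne_zero_apply_eq_zero_secondMaxEig_le (hA.add isHermitian_one) hn j
  have hform : x ⬝ᵥ ((A + diagonal s) *ᵥ x) = x ⬝ᵥ ((A + 1) *ᵥ x) := by
    rw [← diagonal_one]
    exact dotProduct_add_diagonal_mulVec_congr _ fun i hi => if_neg (by rintro rfl; exact hi hxj)
  have hB_le := dotProduct_mulVec_le_maxEig (hA.add (isHermitian_diagonal s))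
  have hmax : x ⬝ᵥ ((A + diagonal s) *ᵥ x) = maxEig (A + diagonal s) * (x ⬝ᵥ x) := by
    refine le_antisymm (hB_le x) ?_
    calc maxEig (A + diagonal s) * (x ⬝ᵥ x)
        ≤ secondMaxEig (A + 1) * (x ⬝ᵥ x) :=
          mul_le_mul_of_nonneg_right hle (Finset.sum_nonneg fun i _ => mul_self_nonneg (x i))
      _ ≤ x ⬝ᵥ ((A + 1) *ᵥ x) := hlow
      _ = x ⬝ᵥ ((A + diagonal s) *ᵥ x) := hform.symm
  exact hx0 (hG.preconnected.eq_zero_of_dotProduct_mulVec_eq_of_apply_eq_zero hB_le hmax hxj)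
end

section
/- Let d ≥ 3, let A be the adjacency matrix of the cycle C_d on vertices 1,…,d, fix a vertex j, and let A′ = A + I − 2·e_j e_jᵀ (the cycle with a loop of weight +1 at every vertex except a loop of weight −1 at j). Then the largest eigenvalue of A′ satisfies λ₁(A′) ≥ 2cos(π/(d+2)) + 1 + [ sin²(π/(d+2)) · (2cos(π/(d+2)) − 2) ] / [ (d+1)/2 + cos(2π/(d+2))/2 ]. -/
/-!
Let `θ = π/(d+2)` and `x v = sin ((k+1)θ)`, where `k` is the forward distance from `j` to `v`.
This is the Perron vector `sin (kθ)`, `1 ≤ k ≤ d+1`, of the path on `d+1` vertices with its two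
end vertices, which both carry `sin θ`, glued together at `j`. Hence
`A x = 2 cos θ • x + sin (dθ) • eⱼ`, and the Rayleigh quotient of `A′ = A + I - 2 eⱼeⱼᵀ` at `x`,
a lower bound for `λ₁(A′)`, is `2 cos θ + 1 + sin θ (sin (dθ) - 2 sin θ) / ‖x‖²`, where
`sin (dθ) = sin (2θ)` and `‖x‖² = (d+2)/2 - sin² θ = (d+1)/2 + cos (2θ)/2`.
-/

open scoped Classical

/-- The cycle graph `C_d` on vertex set `ℤ_d`. -/
def cycleGr (d : ℕ) : SimpleGraph (ZMod d) where
  Adj u v := u ≠ v ∧ (v = u + 1 ∨ u = v + 1)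
  symm := ⟨fun u v h => ⟨h.1.symm, h.2.symm⟩⟩
  loopless := ⟨fun u h => h.1 rfl⟩

open Real Finset Matrix

theorem List.Pairwise.le_getD_length_sub_one {α : Type*} [Preorder α] {l : List α}
    (hl : l.Pairwise (· ≤ ·)) {a : α} (ha : a ∈ l) (b : α) :
    a ≤ l.getD (l.length - 1) b := by
  have hlen : l.length - 1 < l.length := Nat.sub_one_lt (List.length_pos_of_mem ha).ne'
  rw [List.getD_eq_getElem _ _ hlen, ← List.getLast_eq_getElem]
  exact hl.rel_getLast ha

theorem Matrix.IsHermitian.eigenvalues_le_eigList_getD {V : Type*} [Fintype V] [DecidableEq V]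
    {A : Matrix V V ℝ} (hA : A.IsHermitian) (i : V) :
    hA.eigenvalues i ≤ (eigList A).getD (Fintype.card V - 1) 0 := by
  have hsorted := Multiset.pairwise_sort (Finset.univ.val.map hA.eigenvalues) (· ≤ ·)
  have hmem : hA.eigenvalues i ∈ (Finset.univ.val.map hA.eigenvalues).sort (· ≤ ·) := by simp
  rw [eigList, dif_pos hA]
  simpa using hsorted.le_getD_length_sub_one hmem 0

theorem Matrix.IsHermitian.dotProduct_mulVec_le {n : Type*} [Fintype n] [DecidableEq n]
    {M : Matrix n n ℝ} (hM : M.IsHermitian) {μ : ℝ} (hμ : ∀ i, hM.eigenvalues i ≤ μ)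
    (x : n → ℝ) : x ⬝ᵥ M *ᵥ x ≤ μ * (x ⬝ᵥ x) := by
  have hpsd : (algebraMap ℝ _ μ - M).PosSemidef := by
    refine posSemidef_iff_isHermitian_and_spectrum_nonneg.2
      ⟨(isHermitian_diagonal _).sub hM, ?_⟩
    rw [← spectrum.singleton_sub_eq, hM.spectrum_real_eq_range_eigenvalues]
    rintro _ ⟨_, rfl, _, ⟨i, rfl⟩, rfl⟩
    exact sub_nonneg.2 (hμ i)
  have := hpsd.dotProduct_mulVec_nonneg x
  simp only [star_trivial, Algebra.algebraMap_eq_smul_one, sub_mulVec, smul_mulVec, one_mulVec,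
    dotProduct_sub, dotProduct_smul, smul_eq_mul] at this
  linarith

theorem sum_range_cos_two_pi_mul_div {n : ℕ} (hn : 1 < n) :
    ∑ k ∈ range n, cos (2 * π * k / n) = 0 := by
  have h := congrArg Complex.re <|
    (Complex.isPrimitiveRoot_exp n (by omega)).geom_sum_eq_zero hn
  rw [Complex.re_sum, Complex.zero_re] at h
  convert h using 2 with k
  rw [← Complex.exp_nat_mul, ← Complex.exp_ofReal_mul_I_re]
  push_cast
  ring_nf

theorem sum_range_sin_sq_mul_pi_div {n : ℕ} (hn : 1 < n) :
    ∑ k ∈ range n, sin (k * (π / n)) ^ 2 = n / 2 := by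
  have hcos : ∑ k ∈ range n, cos (2 * (k * (π / n))) = 0 := by
    rw [← sum_range_cos_two_pi_mul_div hn]
    congr! 2
    ring
  simp_rw [sin_sq_eq_half_sub]
  rw [sum_sub_distrib, ← sum_div, ← sum_div, hcos]
  simp

theorem sin_mul_pi_div_add {a b : ℝ} (h : a + b ≠ 0) :
    sin (a * (π / (a + b))) = sin (b * (π / (a + b))) := by
  rw [← sin_pi_sub]
  congr 1
  field_simp
  ring

theorem sin_add_one_mul_pi_div_add_two {a : ℝ} (ha : a + 2 ≠ 0) :
    sin ((a + 1) * (π / (a + 2))) = sin (π / (a + 2)) := by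
  simpa [add_assoc, one_add_one_eq_two] using
    sin_mul_pi_div_add (a := a + 1) (b := 1) (by rwa [add_assoc, one_add_one_eq_two])

theorem ZMod.natCast_ne_zero_of_pos_of_lt {d k : ℕ} (hk : 0 < k) (hkd : k < d) :
    (k : ZMod d) ≠ 0 := by
  rw [Ne, ZMod.natCast_eq_zero_iff]
  exact fun h => (Nat.le_of_dvd hk h).not_gt hkd

theorem ZMod.sum_val_sub {d : ℕ} [NeZero d] {M : Type*} [AddCommMonoid M] (f : ℕ → M)
    (j : ZMod d) :
    ∑ v : ZMod d, f (v - j).val = ∑ k ∈ range d, f k := by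
  calc ∑ v : ZMod d, f (v - j).val = ∑ w : ZMod d, f w.val :=
        (Equiv.subRight j).sum_comp (fun w => f w.val)
    _ = ∑ k ∈ range d, f k :=
        sum_nbij' ZMod.val Nat.cast (by simp [ZMod.val_lt]) (by simp) (by simp)
          (fun _ hk => ZMod.val_natCast_of_lt (mem_range.1 hk)) (by simp)

section

variable {d : ℕ}

noncomputable def cycleSineVec (j : ZMod d) (θ : ℝ) (v : ZMod d) : ℝ :=
  sin (((v - j).val + 1) * θ)

theorem cycleSineVec_self (j : ZMod d) (θ : ℝ) : cycleSineVec j θ j = sin θ := by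
  simp [cycleSineVec]

variable [NeZero d]

theorem cycleGr_neighborFinset (hd : 3 ≤ d) (v : ZMod d) :
    (cycleGr d).neighborFinset v = {v + 1, v - 1} := by
  have h1 : (1 : ZMod d) ≠ 0 := by
    exact_mod_cast ZMod.natCast_ne_zero_of_pos_of_lt one_pos (by omega)
  ext u
  rw [SimpleGraph.mem_neighborFinset, mem_insert, mem_singleton]
  change v ≠ u ∧ (u = v + 1 ∨ v = u + 1) ↔ _
  constructor
  · rintro ⟨-, h | rfl⟩
    · exact .inl h
    · exact .inr (add_sub_cancel_right u 1).symm
  · rintro (rfl | rfl)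
    · exact ⟨fun h => h1 (by linear_combination -h), .inl rfl⟩
    · exact ⟨fun h => h1 (by linear_combination h), .inr (sub_add_cancel v 1).symm⟩

theorem cycleGr_adjMatrix_mulVec_apply {R : Type*} [NonAssocSemiring R] (hd : 3 ≤ d)
    (x : ZMod d → R) (v : ZMod d) :
    ((cycleGr d).adjMatrix R *ᵥ x) v = x (v + 1) + x (v - 1) := by
  have h2 : (2 : ZMod d) ≠ 0 := by
    exact_mod_cast ZMod.natCast_ne_zero_of_pos_of_lt two_pos (by omega)
  rw [SimpleGraph.adjMatrix_mulVec_apply, cycleGr_neighborFinset hd, sum_pair]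
  intro h
  exact h2 (by linear_combination h)

theorem sin_val_add_one_mul {θ : ℝ} (hd : 1 < d) (hwrap : sin ((d + 1) * θ) = sin θ)
    (w : ZMod d) :
    sin (((w + 1).val + 1) * θ) = sin ((w.val + 2) * θ) := by
  have : Fact (1 < d) := ⟨hd⟩
  rw [ZMod.val_add, ZMod.val_one]
  rcases (Nat.succ_le_of_lt (ZMod.val_lt w)).lt_or_eq with h | h
  · rw [Nat.mod_eq_of_lt h]
    push_cast
    ring_nf
  · have h' : (w.val : ℝ) + 2 = d + 1 := by
      have := congrArg (Nat.cast : ℕ → ℝ) h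
      push_cast at this
      linarith
    rw [show w.val + 1 = d from h, Nat.mod_self, h', hwrap]
    simp

theorem sin_val_sub_one_mul {θ : ℝ} (hd : 1 < d) (w : ZMod d) :
    sin (((w - 1).val + 1) * θ) = sin (w.val * θ) + if w = 0 then sin (d * θ) else 0 := by
  have : Fact (1 < d) := ⟨hd⟩
  by_cases hw : w = 0
  · rw [hw, zero_sub, ZMod.neg_val, if_neg one_ne_zero, ZMod.val_one, Nat.cast_sub hd.le]
    simp
  · have hw1 : 1 ≤ w.val := ZMod.val_pos.2 hw
    rw [ZMod.val_sub (by rwa [ZMod.val_one]), ZMod.val_one, Nat.cast_sub hw1, if_neg hw]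
    push_cast
    ring_nf

theorem cycleGr_adjMatrix_mulVec_cycleSineVec {θ : ℝ} (hd : 3 ≤ d)
    (hwrap : sin ((d + 1) * θ) = sin θ) (j : ZMod d) :
    (cycleGr d).adjMatrix ℝ *ᵥ cycleSineVec j θ =
      (2 * cos θ) • cycleSineVec j θ + Pi.single j (sin (d * θ)) := by
  ext v
  have hsum (t : ℝ) : sin ((t + 2) * θ) + sin (t * θ) = 2 * cos θ * sin ((t + 1) * θ) := by
    rw [show (t + 2) * θ = (t + 1) * θ + θ by ring, show t * θ = (t + 1) * θ - θ by ring,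
      sin_add, sin_sub]
    ring
  rw [cycleGr_adjMatrix_mulVec_apply hd, Pi.add_apply, Pi.smul_apply, smul_eq_mul,
    Pi.single_apply]
  simp only [cycleSineVec]
  rw [show v + 1 - j = v - j + 1 by ring, show v - 1 - j = v - j - 1 by ring,
    sin_val_add_one_mul (by omega) hwrap, sin_val_sub_one_mul (by omega), ← add_assoc, hsum]
  simp only [sub_eq_zero]

theorem cycleSineVec_dotProduct_mulVec {θ : ℝ} (hd : 3 ≤ d)
    (hwrap : sin ((d + 1) * θ) = sin θ) (j : ZMod d) :
    cycleSineVec j θ ⬝ᵥ ((cycleGr d).adjMatrix ℝ + 1 - single j j (2 : ℝ)) *ᵥ cycleSineVec j θ =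
      (2 * cos θ + 1) * (cycleSineVec j θ ⬝ᵥ cycleSineVec j θ) +
        sin θ * (sin (d * θ) - 2 * sin θ) := by
  have hsingle :
      cycleSineVec j θ ⬝ᵥ single j j (2 : ℝ) *ᵥ cycleSineVec j θ = 2 * sin θ ^ 2 := by
    rw [single_mulVec_eq, dotProduct_smul, dotProduct_single, cycleSineVec_self, smul_eq_mul]
    ring
  rw [sub_mulVec, add_mulVec, one_mulVec, cycleGr_adjMatrix_mulVec_cycleSineVec hd hwrap,
    dotProduct_sub, dotProduct_add, hsingle, dotProduct_add, dotProduct_smul, dotProduct_single,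
    cycleSineVec_self, smul_eq_mul]
  ring

theorem cycleSineVec_dotProduct_self (j : ZMod d) :
    cycleSineVec j (π / (d + 2)) ⬝ᵥ cycleSineVec j (π / (d + 2)) =
      ((d : ℝ) + 1) / 2 + cos (2 * π / (d + 2)) / 2 := by
  have hsum := sum_range_sin_sq_mul_pi_div (n := d + 2) (by omega)
  rw [sum_range_succ, sum_range_succ'] at hsum
  push_cast at hsum
  rw [sin_add_one_mul_pi_div_add_two (by positivity), zero_mul, sin_zero] at hsum
  simp only [dotProduct, cycleSineVec, ← sq]
  rw [ZMod.sum_val_sub (fun k => sin ((k + 1) * (π / (d + 2))) ^ 2),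
    show 2 * π / (d + 2) = 2 * (π / (d + 2)) by ring, cos_two_mul, cos_sq']
  linarith

end

/-- Let `d ≥ 3`, let `A` be the adjacency matrix of the cycle `C_d`, fix a vertex `j`,
and let `A′ = A + I − 2 eⱼeⱼᵀ` (the cycle with a `+1` loop at every vertex except a
`−1` loop at `j`).  Then
`λ₁(A′) ≥ 2cos(π/(d+2)) + 1 + sin²(π/(d+2))(2cos(π/(d+2)) − 2)/((d+1)/2 + cos(2π/(d+2))/2)`. -/
theorem cycle_oneNegLoop_maxEig_lower_bound (d : ℕ) [NeZero d] (hd : 3 ≤ d)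
    (j : ZMod d) :
    2 * Real.cos (Real.pi / (d + 2)) + 1 +
        Real.sin (Real.pi / (d + 2)) ^ 2 * (2 * Real.cos (Real.pi / (d + 2)) - 2) /
          (((d : ℝ) + 1) / 2 + Real.cos (2 * Real.pi / (d + 2)) / 2) ≤
      (eigList ((cycleGr d).adjMatrix ℝ + 1 - Matrix.single j j (2 : ℝ))).getD
        (d - 1) 0 := by
  set θ := π / (d + 2)
  set x := cycleSineVec j θ
  set M := (cycleGr d).adjMatrix ℝ + 1 - single j j (2 : ℝ)
  have hM : M.IsHermitian := ((cycleGr d).isHermitian_adjMatrix ℝ).add isHermitian_one |>.sub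
    (isHermitian_iff_isSymm.2 (transpose_single j j 2))
  have hsin_d : sin (d * θ) = 2 * sin θ * cos θ := by
    rw [sin_mul_pi_div_add (a := d) (b := 2) (by positivity), sin_two_mul]
  have hx_pos : 0 < x ⬝ᵥ x := by
    have hd' : (3 : ℝ) ≤ d := by exact_mod_cast hd
    rw [cycleSineVec_dotProduct_self]
    linarith [neg_one_le_cos (2 * π / (d + 2))]
  have hray : x ⬝ᵥ M *ᵥ x ≤ (eigList M).getD (d - 1) 0 * (x ⬝ᵥ x) :=
    hM.dotProduct_mulVec_le (fun i => by simpa using hM.eigenvalues_le_eigList_getD i) x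
  rw [← cycleSineVec_dotProduct_self j]
  calc 2 * cos θ + 1 + sin θ ^ 2 * (2 * cos θ - 2) / (x ⬝ᵥ x) = x ⬝ᵥ M *ᵥ x / (x ⬝ᵥ x) := by
        rw [cycleSineVec_dotProduct_mulVec hd (sin_add_one_mul_pi_div_add_two (by positivity)) j,
          hsin_d]
        field_simp
        ring
    _ ≤ (eigList M).getD (d - 1) 0 := (div_le_iff₀ hx_pos).2 hray
end

section
/- For all integers k ≥ 2 and ℓ ≥ 1, the diameter of the CLEX graph C(k,ℓ) is exactly ℓ: every pair of vertices is joined by a path of length at most ℓ, and for any i ≠ j in [k] the vertices (i,i,…,i) and (j,j,…,j) are at distance exactly ℓ. -/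
/-!
Upper bound: walk from `u` to `w` carrying the last coordinate `c = u (ℓ-1)` downwards. The
vertex agreeing with `u` below `n`, equal to `c` at `n` and with `w` above `n` is joined by a
cross edge at level `n - 1` to the one with the carry at `n - 1`; once the carry reaches
coordinate `0`, a clique edge replaces it by `w 0`. That is `ℓ` edges.

Lower bound: along any edge the new vertex agrees with the old one, after permuting two
coordinates, everywhere except at a single coordinate. Hence the number of coordinates equal
to `j` grows by at most one per edge, and it is `0` at `(i,…,i)` and `ℓ` at `(j,…,j)`.
-/

open scoped Classical

/-- The (directed description of the) edges of the CLEX graph `C(k,ℓ)` on vertex set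
`[k]^ℓ` (coordinates indexed `0,…,ℓ−1`, coordinate `ℓ−1` being the "copy" index of the
recursion).  Unfolding the recursive definition, the edges are:
* clique edges: the two endpoints agree on all coordinates except coordinate `0`;
* cross edges at level `i` (for `i+1 < ℓ`): the endpoints agree on all coordinates
  `< i` and `> i+1`, the `(i+1)`-st coordinate of one endpoint equals the `i`-th
  coordinate of the other, and the remaining two coordinates are arbitrary. -/
def clexRel (k ℓ : ℕ) (u w : Fin ℓ → Fin k) : Prop :=
  (∀ m : Fin ℓ, (m : ℕ) ≠ 0 → u m = w m) ∨
  (∃ i j : Fin ℓ, (j : ℕ) = (i : ℕ) + 1 ∧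
    (∀ m : Fin ℓ, (m : ℕ) < (i : ℕ) → u m = w m) ∧
    (∀ m : Fin ℓ, (j : ℕ) < (m : ℕ) → u m = w m) ∧
    w j = u i)

/-- The CLEX graph `C(k,ℓ)` (self-loops discarded). -/
def clex (k ℓ : ℕ) : SimpleGraph (Fin ℓ → Fin k) where
  Adj u w := u ≠ w ∧ (clexRel k ℓ u w ∨ clexRel k ℓ w u)
  symm := ⟨fun u w h => ⟨h.1.symm, h.2.symm⟩⟩
  loopless := ⟨fun u h => h.1 rfl⟩


open Finset

namespace SimpleGraph

variable {V : Type*} {G : SimpleGraph V}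

theorem Walk.le_add_length_of_adj_le_succ (f : V → ℕ)
    (hf : ∀ v w, G.Adj v w → f w ≤ f v + 1) {u v : V} (p : G.Walk u v) :
    f v ≤ f u + p.length := by
  induction p with
  | nil => simp
  | cons h _ ih =>
    rw [Walk.length_cons]
    have := hf _ _ h
    omega

theorem Reachable.le_add_dist_of_adj_le_succ (f : V → ℕ)
    (hf : ∀ v w, G.Adj v w → f w ≤ f v + 1) {u v : V} (h : G.Reachable u v) :
    f v ≤ f u + G.dist u v := by
  obtain ⟨p, hp⟩ := h.exists_walk_length_eq_dist
  exact hp ▸ p.le_add_length_of_adj_le_succ f hf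

end SimpleGraph

section PermOffOne

variable {ι α : Type*}

theorem card_filter_eq_le_succ_of_eq_comp_perm_off [Fintype ι] [DecidableEq ι] [DecidableEq α]
    {a b : ι → α} (σ : Equiv.Perm ι) (p : ι)
    (h : ∀ m ≠ p, b m = a (σ m)) (c : α) :
    #{m | b m = c} ≤ #{m | a m = c} + 1 := by
  calc #{m | b m = c}
      ≤ #(insert p ({m | a (σ m) = c} : Finset ι)) := by
        refine card_le_card fun m hm => ?_
        rw [mem_filter_univ] at hm
        by_cases hmp : m = p
        · exact hmp ▸ mem_insert_self m _
        · exact mem_insert_of_mem (by simpa [← h m hmp])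
    _ ≤ #{m | a (σ m) = c} + 1 := card_insert_le _ _
    _ = #{m | a m = c} + 1 := by
        rw [card_equiv σ (t := {m | a m = c}) fun m => by simp]

theorem eq_comp_perm_off_symm {a b : ι → α} {σ : Equiv.Perm ι} {p : ι}
    (h : ∀ m ≠ p, b m = a (σ m)) : ∀ n ≠ σ p, a n = b (σ.symm n) := by
  intro n hn
  rw [h _ (by simpa [Equiv.symm_apply_eq] using hn), Equiv.apply_symm_apply]

end PermOffOne

section Clex

variable {k ℓ : ℕ}

theorem clexRel.exists_perm_off (hℓ : 0 < ℓ) {a b : Fin ℓ → Fin k} (h : clexRel k ℓ a b) :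
    ∃ (σ : Equiv.Perm (Fin ℓ)) (p : Fin ℓ), ∀ m ≠ p, b m = a (σ m) := by
  rcases h with hclique | ⟨i, j, hji, hlt, hgt, hcarry⟩
  · exact ⟨1, ⟨0, hℓ⟩, fun m hm => (hclique m fun h0 => hm (Fin.ext h0)).symm⟩
  · refine ⟨Equiv.swap i j, i, fun m hmi => ?_⟩
    by_cases hmj : m = j
    · rw [hmj, Equiv.swap_apply_right, hcarry]
    · rw [Equiv.swap_apply_of_ne_of_ne hmi hmj]
      have hmi' : (m : ℕ) ≠ i := Fin.val_ne_of_ne hmi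
      have hmj' : (m : ℕ) ≠ j := Fin.val_ne_of_ne hmj
      rcases lt_or_gt_of_ne hmi' with hm | hm
      · exact (hlt m hm).symm
      · exact (hgt m (by omega)).symm

theorem card_filter_eq_le_succ_of_clex_adj {a b : Fin ℓ → Fin k} (h : (clex k ℓ).Adj a b)
    (c : Fin k) : #{m | b m = c} ≤ #{m | a m = c} + 1 := by
  obtain ⟨m, -⟩ := Function.ne_iff.mp h.1
  rcases h.2 with hab | hba
  · obtain ⟨σ, p, hσ⟩ := hab.exists_perm_off m.pos
    exact card_filter_eq_le_succ_of_eq_comp_perm_off σ p hσ c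
  · obtain ⟨σ, p, hσ⟩ := hba.exists_perm_off m.pos
    exact card_filter_eq_le_succ_of_eq_comp_perm_off σ.symm (σ p) (eq_comp_perm_off_symm hσ) c

theorem le_clex_dist_const {i j : Fin k} (hij : i ≠ j)
    (h : (clex k ℓ).Reachable (fun _ => i) (fun _ => j)) :
    ℓ ≤ (clex k ℓ).dist (fun _ => i) (fun _ => j) := by
  have := h.le_add_dist_of_adj_le_succ (fun v => #{m | v m = j})
    fun _ _ hadj => card_filter_eq_le_succ_of_clex_adj hadj j
  simpa [hij] using this

def spliceAt {α : Type*} (u : Fin ℓ → α) (c : α) (w : Fin ℓ → α) (n : ℕ) : Fin ℓ → α :=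
  fun m => if (m : ℕ) < n then u m else if (m : ℕ) = n then c else w m

theorem spliceAt_last {α : Type*} (hℓ : 0 < ℓ) (u w : Fin ℓ → α) :
    spliceAt u (u ⟨ℓ - 1, by omega⟩) w (ℓ - 1) = u := by
  funext m
  have hm := m.isLt
  by_cases hlast : (m : ℕ) = ℓ - 1
  · simp [spliceAt, show m = ⟨ℓ - 1, by omega⟩ from Fin.ext hlast]
  · simp [spliceAt, show (m : ℕ) < ℓ - 1 by omega]

theorem clex_edist_le_one_of_clexRel {u w : Fin ℓ → Fin k} (h : clexRel k ℓ u w) :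
    (clex k ℓ).edist u w ≤ 1 := by
  rw [SimpleGraph.edist_le_one_iff_adj_or_eq]
  by_cases huw : u = w
  · exact Or.inr huw
  · exact Or.inl ⟨huw, Or.inl h⟩

theorem clex_edist_spliceAt_le (u w : Fin ℓ → Fin k) (c : Fin k) :
    ∀ n < ℓ, (clex k ℓ).edist (spliceAt u c w n) w ≤ n + 1 := by
  intro n hn
  induction n with
  | zero =>
    refine clex_edist_le_one_of_clexRel (Or.inl fun m hm => ?_)
    simp [spliceAt, hm]
  | succ n ih =>
    have hstep : (clex k ℓ).edist (spliceAt u c w (n + 1)) (spliceAt u c w n) ≤ 1 := by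
      rw [SimpleGraph.edist_comm]
      refine clex_edist_le_one_of_clexRel
        (Or.inr ⟨⟨n, by omega⟩, ⟨n + 1, hn⟩, rfl, fun m hm => ?_, fun m hm => ?_, ?_⟩)
      · simp [spliceAt, hm, hm.trans (Nat.lt_succ_self n)]
      · rw [Fin.val_mk] at hm
        simp [spliceAt, show ¬ (m : ℕ) < n by omega, show ¬ (m : ℕ) < n + 1 by omega,
          show (m : ℕ) ≠ n by omega, show (m : ℕ) ≠ n + 1 by omega]
      · simp [spliceAt]
    calc (clex k ℓ).edist (spliceAt u c w (n + 1)) w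
        ≤ (clex k ℓ).edist (spliceAt u c w (n + 1)) (spliceAt u c w n)
          + (clex k ℓ).edist (spliceAt u c w n) w := SimpleGraph.edist_triangle
      _ ≤ 1 + (n + 1) := add_le_add hstep (ih (by omega))
      _ = ↑(n + 1) + 1 := by push_cast; ring

theorem clex_edist_le (hℓ : 0 < ℓ) (u w : Fin ℓ → Fin k) : (clex k ℓ).edist u w ≤ ℓ := by
  have h := clex_edist_spliceAt_le u w (u ⟨ℓ - 1, by omega⟩) (ℓ - 1) (by omega)
  rwa [spliceAt_last hℓ, show ((ℓ - 1 : ℕ) : ℕ∞) + 1 = ℓ by norm_cast; omega] at h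

end Clex

theorem clex_diameter_general (k ℓ : ℕ) (hl : 1 ≤ ℓ) :
    (∀ u w : Fin ℓ → Fin k, (clex k ℓ).Reachable u w ∧ (clex k ℓ).dist u w ≤ ℓ) ∧
    (∀ i j : Fin k, i ≠ j →
      (clex k ℓ).dist (fun _ => i) (fun _ => j) = ℓ) := by
  have hreach (u w : Fin ℓ → Fin k) : (clex k ℓ).Reachable u w :=
    SimpleGraph.edist_ne_top_iff_reachable.mp
      (ne_top_of_le_ne_top (by simp) (clex_edist_le hl u w))
  have hdist (u w : Fin ℓ → Fin k) : (clex k ℓ).dist u w ≤ ℓ := by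
    have h := clex_edist_le hl u w
    rw [← (hreach u w).coe_dist_eq_edist] at h
    exact_mod_cast h
  exact ⟨fun u w => ⟨hreach u w, hdist u w⟩,
    fun i j hij => le_antisymm (hdist _ _) (le_clex_dist_const hij (hreach _ _))⟩

/-- For `k ≥ 2` and `ℓ ≥ 1` the diameter of the CLEX graph `C(k,ℓ)` is exactly `ℓ`:
every pair of vertices is joined by a path of length at most `ℓ`, and the constant
vertices `(i,…,i)` and `(j,…,j)` with `i ≠ j` are at distance exactly `ℓ`. -/
theorem clex_diameter (k ℓ : ℕ) (hk : 2 ≤ k) (hl : 1 ≤ ℓ) :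
    (∀ u w : Fin ℓ → Fin k, (clex k ℓ).Reachable u w ∧ (clex k ℓ).dist u w ≤ ℓ) ∧
    (∀ i j : Fin k, i ≠ j →
      (clex k ℓ).dist (fun _ => i) (fun _ => j) = ℓ) :=
  clex_diameter_general k ℓ hl
end

section
/- Let k ≥ 1 and let M be the k²×k² real matrix indexed by pairs in [k]×[k] with entries M_{(i,j),(a,b)} = 2 if i = b and j = a; M_{(i,j),(a,b)} = 1 if exactly one of the conditions i = b, j = a holds; and M_{(i,j),(a,b)} = 0 otherwise. Then the spectrum of M is exactly the multiset { 2k with multiplicity 1, k with multiplicity k−1, −k with multiplicity k−1, 0 with multiplicity (k−1)² }. -/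
/-!
Writing `P` and `Q` for the `k² × k` matrices with columns `e_l ⊗ 𝟙` and `𝟙 ⊗ e_l`, the matrix
`M = P Qᵀ + Q Pᵀ = [P Q] [Qᵀ; Pᵀ]` factors through `ℝ^{2k}`. Hence its characteristic polynomial
agrees, up to a power of `X`, with that of the `2k × 2k` Gram matrix `[[J, k I], [k I, J]]`, where
`J` is the all-ones matrix. Block row and column operations split this into `J + k I` and `J - k I`,
and since `J` has rank one their spectra are `{2k, k^(k-1)}` and `{0, (-k)^(k-1)}`.
-/

open scoped Classical

/-- The multiset of eigenvalues of a real symmetric matrix. -/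
noncomputable def eigMultiset {V : Type*} [Fintype V] [DecidableEq V]
    (A : Matrix V V ℝ) : Multiset ℝ :=
  if h : A.IsHermitian then Finset.univ.val.map h.eigenvalues else 0

/-- The cross-connection matrix `M` of the CLEX topology: indexed by `[k] × [k]`, with
`M_{(i,j),(a,b)} = 2` if `i = b` and `j = a`, `= 1` if exactly one of these holds, and
`= 0` otherwise. -/
def crossM (k : ℕ) : Matrix (Fin k × Fin k) (Fin k × Fin k) ℝ :=
  fun p q => (if p.1 = q.2 then 1 else 0) + (if p.2 = q.1 then 1 else 0)

open Matrix Polynomial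

section Charpoly

variable {R n : Type*} [CommRing R] [Fintype n] [DecidableEq n]

theorem Matrix.det_fromBlocks_self_self (A B : Matrix n n R) :
    (fromBlocks A B B A).det = (A + B).det * (A - B).det := by
  have h : fromBlocks 1 1 0 1 * fromBlocks A B B A * fromBlocks 1 (-1) 0 1 =
      fromBlocks (A + B) 0 B (A - B) := by
    simp only [fromBlocks_multiply]
    congr 1 <;> noncomm_ring
  simpa [det_fromBlocks_zero₂₁, det_fromBlocks_zero₁₂] using congrArg det h

theorem Matrix.charpoly_fromBlocks_self_self (A B : Matrix n n R) :
    (fromBlocks A B B A).charpoly = (A + B).charpoly * (A - B).charpoly := by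
  rw [charpoly, charmatrix_fromBlocks, det_fromBlocks_self_self, charpoly, charpoly]
  congr 2 <;> ext i j : 1 <;> simp only [charmatrix_apply, Matrix.add_apply,
    Matrix.sub_apply, Matrix.neg_apply, map_apply, map_add, map_sub] <;> ring

theorem Matrix.charpoly_vecMulVec_one_sub_scalar [Nonempty n] (c : R) :
    (vecMulVec (1 : n → R) 1 - scalar n c).charpoly =
      (X + C c) ^ (Fintype.card n - 1) * (X + C c - C (Fintype.card n : R)) := by
  obtain ⟨m, hm⟩ : ∃ m, Fintype.card n = m + 1 := ⟨_, (Nat.sub_add_cancel Fintype.card_pos).symm⟩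
  rw [charpoly_sub_scalar, charpoly_vecMulVec]
  simp [hm, pow_succ, smul_eq_C_mul]
  ring

end Charpoly

section CrossMatrix

variable (ι R : Type*) [Fintype ι] [DecidableEq ι] [CommRing R]

-- The columns are `e_l ⊗ 𝟙` and `𝟙 ⊗ e_l`, so `crossMatrix` is
-- `Σ_l (𝟙 ⊗ e_l)(e_l ⊗ 𝟙)ᵀ + (e_l ⊗ 𝟙)(𝟙 ⊗ e_l)ᵀ`.
def fstIndicator : Matrix (ι × ι) ι R := of fun p l => if p.1 = l then 1 else 0

def sndIndicator : Matrix (ι × ι) ι R := of fun p l => if p.2 = l then 1 else 0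

def crossMatrix : Matrix (ι × ι) (ι × ι) R :=
  fstIndicator ι R * (sndIndicator ι R)ᵀ + sndIndicator ι R * (fstIndicator ι R)ᵀ

variable {ι R}

theorem crossMatrix_isSymm : (crossMatrix ι R).IsSymm := by
  rw [IsSymm, crossMatrix]
  simp only [transpose_add, transpose_mul, transpose_transpose, add_comm]

theorem fstIndicator_transpose_mul_sndIndicator :
    (fstIndicator ι R)ᵀ * sndIndicator ι R = vecMulVec 1 1 := by
  ext l l'
  rw [Matrix.mul_apply]
  simp [fstIndicator, sndIndicator, Fintype.sum_prod_type, vecMulVec_apply]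

theorem sndIndicator_transpose_mul_fstIndicator :
    (sndIndicator ι R)ᵀ * fstIndicator ι R = vecMulVec 1 1 := by
  ext l l'
  rw [Matrix.mul_apply]
  simp [fstIndicator, sndIndicator, Fintype.sum_prod_type, vecMulVec_apply]

theorem fstIndicator_transpose_mul_self :
    (fstIndicator ι R)ᵀ * fstIndicator ι R = scalar ι (Fintype.card ι : R) := by
  ext l l'
  rw [Matrix.mul_apply, scalar_apply, diagonal_apply]
  by_cases h : l = l'
  · simp [fstIndicator, Fintype.sum_prod_type, h]
  · simp [fstIndicator, Fintype.sum_prod_type, h, Ne.symm h]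

theorem sndIndicator_transpose_mul_self :
    (sndIndicator ι R)ᵀ * sndIndicator ι R = scalar ι (Fintype.card ι : R) := by
  ext l l'
  rw [Matrix.mul_apply, scalar_apply, diagonal_apply]
  by_cases h : l = l'
  · simp [sndIndicator, Fintype.sum_prod_type, h]
  · simp [sndIndicator, Fintype.sum_prod_type, h, Ne.symm h]

theorem fromRows_mul_fromCols_indicator :
    fromRows (sndIndicator ι R)ᵀ (fstIndicator ι R)ᵀ * fromCols (fstIndicator ι R) (sndIndicator ι R) =
      fromBlocks (vecMulVec 1 1) (scalar ι (Fintype.card ι : R))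
        (scalar ι (Fintype.card ι : R)) (vecMulVec 1 1) := by
  rw [fromRows_mul_fromCols, sndIndicator_transpose_mul_fstIndicator,
    sndIndicator_transpose_mul_self, fstIndicator_transpose_mul_self,
    fstIndicator_transpose_mul_sndIndicator]

theorem charpoly_crossMatrix [Nonempty ι] :
    (crossMatrix ι R).charpoly =
      (X - C (2 * Fintype.card ι : R)) * (X - C (Fintype.card ι : R)) ^ (Fintype.card ι - 1) *
        (X + C (Fintype.card ι : R)) ^ (Fintype.card ι - 1) * X ^ ((Fintype.card ι - 1) ^ 2) := by
  have hplus : vecMulVec 1 1 + scalar ι (Fintype.card ι : R) =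
      vecMulVec 1 1 - scalar ι (-(Fintype.card ι : R)) := by
    rw [map_neg, sub_neg_eq_add]
  have hcomm := charpoly_mul_comm' (fromCols (fstIndicator ι R) (sndIndicator ι R))
    (fromRows (sndIndicator ι R)ᵀ (fstIndicator ι R)ᵀ)
  rw [fromCols_mul_fromRows, fromRows_mul_fromCols_indicator, charpoly_fromBlocks_self_self, hplus,
    charpoly_vecMulVec_one_sub_scalar, charpoly_vecMulVec_one_sub_scalar] at hcomm
  obtain ⟨m, hm⟩ : ∃ m, Fintype.card ι = m + 1 := ⟨_, (Nat.sub_add_cancel Fintype.card_pos).symm⟩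
  simp only [Fintype.card_prod, Fintype.card_sum, hm, Nat.add_sub_cancel] at hcomm ⊢
  refine (isRegular_X_pow (m + 1 + (m + 1))).left (hcomm.trans ?_)
  simp only [map_neg, map_mul, map_ofNat]
  ring

end CrossMatrix

theorem eigMultiset_eq_roots_charpoly {n : Type*} [Fintype n] [DecidableEq n] {A : Matrix n n ℝ}
    (hA : A.IsHermitian) : eigMultiset A = A.charpoly.roots := by
  rw [eigMultiset, dif_pos hA, hA.roots_charpoly_eq_eigenvalues]
  simp

theorem crossM_eq_crossMatrix (k : ℕ) : crossM k = crossMatrix (Fin k) ℝ := by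
  ext p q
  simp [crossM, crossMatrix, fstIndicator, sndIndicator, Matrix.mul_apply, eq_comm]

/-- For `k ≥ 1`, the spectrum of `M` is the multiset
`{2k (×1), k (×(k−1)), −k (×(k−1)), 0 (×(k−1)²)}`. -/
theorem crossM_spectrum (k : ℕ) (hk : 1 ≤ k) :
    eigMultiset (crossM k) =
      Multiset.replicate 1 (2 * (k : ℝ)) + Multiset.replicate (k - 1) (k : ℝ) +
        Multiset.replicate (k - 1) (-(k : ℝ)) +
        Multiset.replicate ((k - 1) ^ 2) (0 : ℝ) := by
  have : Nonempty (Fin k) := ⟨⟨0, hk⟩⟩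
  have hM : (crossM k).IsHermitian := by
    rw [crossM_eq_crossMatrix, isHermitian_iff_isSymm]
    exact crossMatrix_isSymm
  rw [eigMultiset_eq_roots_charpoly hM, crossM_eq_crossMatrix, charpoly_crossMatrix,
    Fintype.card_fin, ← roots_multiset_prod_X_sub_C (_ + _)]
  congr 1
  simp only [Multiset.map_add, Multiset.prod_add, Multiset.map_replicate,
    Multiset.prod_replicate, map_neg, map_zero, sub_neg_eq_add, sub_zero, pow_one]
end

section
/- Let G be a connected t-regular graph on k vertices and let ℓ ≥ 3. Then the bisection bandwidth of the generalized CLEX multigraph C(G,ℓ) is at most k^{ℓ+1}; that is, there exists X ⊆ [k]^ℓ with |X| = ⌊k^ℓ/2⌋ such that 𝟙_Xᵀ A 𝟙_{X^c} ≤ k^{ℓ+1}, where A is the adjacency matrix of C(G,ℓ). -/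
open scoped Classical

/-- The adjacency matrix of the generalized CLEX multigraph `C(G,ℓ)`, written
entrywise on tuples:  `A = A_G ⊗ I_{k^{ℓ−1}} + Σ_{j=0}^{ℓ−2} I_{k^j} ⊗ M ⊗ I_{k^{ℓ−2−j}}`,
where `M` is the CLEX cross-connection matrix
`M_{(i,j),(a,b)} = [i = b] + [j = a]`.  Under the canonical identification of
`[k]^ℓ` with the Kronecker-product index set, the first summand contributes
`A_G(u₀,w₀)` when all other coordinates agree, and the `j`-th term of the sum
contributes `M((u_j,u_{j+1}),(w_j,w_{j+1}))` when all coordinates other than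
`j, j+1` agree. -/
noncomputable def clexMat {k : ℕ} (AG : Matrix (Fin k) (Fin k) ℝ) (ℓ : ℕ) :
    Matrix (Fin ℓ → Fin k) (Fin ℓ → Fin k) ℝ :=
  fun u w =>
    (if h : 0 < ℓ then
      AG (u ⟨0, h⟩) (w ⟨0, h⟩) *
        (if ∀ m : Fin ℓ, 0 < (m : ℕ) → u m = w m then 1 else 0)
    else 0) +
    ∑ j : Fin ℓ,
      if h : (j : ℕ) + 1 < ℓ then
        (if ∀ m : Fin ℓ, (m : ℕ) < (j : ℕ) → u m = w m then 1 else 0) *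
          (((if u j = w ⟨(j : ℕ) + 1, h⟩ then 1 else 0) +
            (if u ⟨(j : ℕ) + 1, h⟩ = w j then 1 else 0) : ℝ)) *
          (if ∀ m : Fin ℓ, (j : ℕ) + 1 < (m : ℕ) → u m = w m then 1 else 0)
      else 0

/-!
Take for `X` the `T = ⌊k^ℓ/2⌋` tuples of smallest base-`k` value (coordinate `0` least
significant). A `G`-edge changes only coordinate `0`; an `M`-edge at positions `(j, j+1)` replaces
the digit pair `(x, y)` by `(y, m)`. If the endpoints of an edge leaving `X` agree at all
positions `≥ c`, both their values have quotient `(T-1)/k^c` by `k^c`, so they lie in one block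
of `k^c` tuples. Hence at most `k^2` `G`-edges are cut. For the `M`-edges at `(j, j+1)`, the
crossing pairs `(z, m)` have `z` in one block of `k^(j+2)` tuples, and each `z` crosses for at
most `k-1` values of `m`, since one of `m = 0`, `m = k-1` keeps it on its own side. Finally
`k^2 + ∑_{j ≤ ℓ-2} (k-1) k^(j+2) = k^(ℓ+1)`.
-/

open Finset

theorem Nat.div_eq_pred_div_of_lt_of_le {a b N T : ℕ} (h : a / N = b / N) (ha : a < T)
    (hb : T ≤ b) : a / N = (T - 1) / N :=
  le_antisymm (Nat.div_le_div_right (by omega)) (h ▸ Nat.div_le_div_right (by omega))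

namespace ClexBisection

variable {k ℓ : ℕ}

def baseVal (u : Fin ℓ → Fin k) : ℕ := finFunctionFinEquiv u

lemma baseVal_eq_sum (u : Fin ℓ → Fin k) : baseVal u = ∑ i, (u i : ℕ) * k ^ (i : ℕ) := rfl

lemma baseVal_injective : Function.Injective (baseVal (k := k) (ℓ := ℓ)) :=
  Fin.val_injective.comp finFunctionFinEquiv.injective

lemma baseVal_update (u : Fin ℓ → Fin k) (i : Fin ℓ) (a : Fin k) :
    baseVal (Function.update u i a) + u i * k ^ (i : ℕ) = baseVal u + a * k ^ (i : ℕ) := by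
  simp only [baseVal_eq_sum, ← add_sum_erase _ _ (mem_univ i), Function.update_self]
  have : ∑ x ∈ univ.erase i, (Function.update u i a x : ℕ) * k ^ (x : ℕ) =
      ∑ x ∈ univ.erase i, (u x : ℕ) * k ^ (x : ℕ) :=
    sum_congr rfl fun x hx => by rw [Function.update_of_ne (ne_of_mem_erase hx)]
  rw [this]
  ring

lemma sum_low_digits_lt_pow (hk : 0 < k) (u : Fin ℓ → Fin k) (c : ℕ) :
    ∑ i : Fin ℓ with i.val < c, (u i : ℕ) * k ^ (i : ℕ) < k ^ c := by
  obtain ⟨K, rfl⟩ : ∃ K, k = K + 1 := ⟨k - 1, by omega⟩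
  calc ∑ i : Fin ℓ with i.val < c, (u i : ℕ) * (K + 1) ^ (i : ℕ)
      ≤ ∑ i : Fin ℓ with i.val < c, K * (K + 1) ^ (i : ℕ) :=
        sum_le_sum fun i _ => Nat.mul_le_mul_right _ (Nat.lt_succ_iff.mp (u i).2)
    _ = ∑ n ∈ (univ.filter fun i : Fin ℓ => (i : ℕ) < c).map Fin.valEmbedding, K * (K + 1) ^ n :=
        (sum_map _ Fin.valEmbedding fun n => K * (K + 1) ^ n).symm
    _ ≤ ∑ n ∈ range c, K * (K + 1) ^ n :=
        sum_le_sum_of_subset fun n hn => by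
          obtain ⟨i, hi, rfl⟩ := mem_map.mp hn
          exact mem_range.mpr (mem_filter.mp hi).2
    _ < (K + 1) ^ c := by
        rw [← mul_sum, ← geom_sum_mul_add K c, mul_comm]
        omega

lemma baseVal_div_pow_congr (hk : 0 < k) {c : ℕ} {u w : Fin ℓ → Fin k}
    (h : ∀ i : Fin ℓ, c ≤ (i : ℕ) → u i = w i) : baseVal u / k ^ c = baseVal w / k ^ c := by
  have high (v : Fin ℓ → Fin k) : baseVal v / k ^ c =
      (∑ i : Fin ℓ with ¬ i.val < c, (v i : ℕ) * k ^ (i : ℕ)) / k ^ c := by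
    have hdvd : k ^ c ∣ ∑ i : Fin ℓ with ¬ i.val < c, (v i : ℕ) * k ^ (i : ℕ) :=
      dvd_sum fun i hi => (pow_dvd_pow k (not_lt.mp (mem_filter.mp hi).2)).mul_left _
    rw [baseVal_eq_sum, ← sum_filter_add_sum_filter_not univ (fun i : Fin ℓ => (i : ℕ) < c),
      Nat.add_div_of_dvd_left hdvd, Nat.div_eq_of_lt (sum_low_digits_lt_pow hk v c), zero_add]
  rw [high, high]
  congr 1
  exact sum_congr rfl fun i hi => by rw [h i (not_lt.mp (mem_filter.mp hi).2)]

lemma baseVal_div_pow_eq_of_crossing (hk : 0 < k) {c T : ℕ} {u w : Fin ℓ → Fin k}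
    (h : ∀ i : Fin ℓ, c ≤ (i : ℕ) → u i = w i) (hcross : baseVal u < T ↔ T ≤ baseVal w) :
    baseVal u / k ^ c = (T - 1) / k ^ c := by
  have huw := baseVal_div_pow_congr hk h
  by_cases hu : baseVal u < T
  · exact Nat.div_eq_pred_div_of_lt_of_le huw hu (hcross.mp hu)
  · rw [huw]
    exact Nat.div_eq_pred_div_of_lt_of_le huw.symm (not_le.mp (mt hcross.mpr hu)) (not_lt.mp hu)

lemma card_baseVal_div_pow_eq_le (hk : 0 < k) (c q : ℕ) :
    #{u : Fin ℓ → Fin k | baseVal u / k ^ c = q} ≤ k ^ c := by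
  have hkc : 0 < k ^ c := pow_pos hk c
  calc #{u : Fin ℓ → Fin k | baseVal u / k ^ c = q}
      ≤ #(Ico (q * k ^ c) (q * k ^ c + k ^ c)) := by
        refine card_le_card_of_injOn baseVal (fun u hu => ?_) baseVal_injective.injOn
        obtain rfl : baseVal u / k ^ c = q := (mem_filter.mp hu).2
        exact mem_Ico.mpr ⟨Nat.div_mul_le_self _ _, Nat.lt_div_mul_add hkc⟩
    _ = k ^ c := by simp

def initSeg (T : ℕ) : Finset (Fin ℓ → Fin k) := {u | baseVal u < T}

lemma mem_initSeg {T : ℕ} {u : Fin ℓ → Fin k} : u ∈ initSeg T ↔ baseVal u < T := by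
  simp [initSeg]

lemma card_initSeg {T : ℕ} (hT : T ≤ k ^ ℓ) : #(initSeg (k := k) (ℓ := ℓ) T) = T := by
  rw [card_equiv finFunctionFinEquiv (t := {x : Fin (k ^ ℓ) | (x : ℕ) < T}) fun u => by
    simp [mem_initSeg, baseVal], Fin.card_filter_val_lt, min_eq_right hT]

/-- With `j' = j + 1`, the `M`-part of `clexMat` at positions `(j, j')` links `u` and `w` once
for each of `u = clexShift j j' (u j') w` and `w = clexShift j j' (w j') u` that holds. -/
def clexShift (j j' : Fin ℓ) (m : Fin k) (z : Fin ℓ → Fin k) : Fin ℓ → Fin k :=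
  Function.update (Function.update z j (z j')) j' m

def clexShiftCount (j j' : Fin ℓ) (u w : Fin ℓ → Fin k) : ℝ :=
  (if u = clexShift j j' (u j') w then 1 else 0) + (if w = clexShift j j' (w j') u then 1 else 0)

section clexShift

variable {j j' : Fin ℓ}

lemma clexShift_apply_of_ne {i : Fin ℓ} (hij : i ≠ j) (hij' : i ≠ j') (m : Fin k)
    (z : Fin ℓ → Fin k) : clexShift j j' m z i = z i := by
  simp [clexShift, hij, hij']

lemma eq_clexShift_of_eq {u w : Fin ℓ → Fin k} (hout : ∀ i, i ≠ j → i ≠ j' → u i = w i)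
    (h : u j = w j') : u = clexShift j j' (u j') w := by
  funext i
  rcases eq_or_ne i j' with rfl | hij'
  · simp [clexShift]
  rcases eq_or_ne i j with rfl | hij
  · simp [clexShift, hij', h]
  · rw [clexShift_apply_of_ne hij hij', hout i hij hij']

lemma baseVal_clexShift (hjj' : j ≠ j') (m : Fin k) (z : Fin ℓ → Fin k) :
    baseVal (clexShift j j' m z) + z j * k ^ (j : ℕ) + z j' * k ^ (j' : ℕ) =
      baseVal z + z j' * k ^ (j : ℕ) + m * k ^ (j' : ℕ) := by
  have h₁ := baseVal_update z j (z j')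
  have h₂ := baseVal_update (Function.update z j (z j')) j' m
  rw [Function.update_of_ne hjj'.symm] at h₂
  rw [clexShift]
  omega

lemma exists_baseVal_clexShift_lt_iff (hj' : (j' : ℕ) = j + 1) (hk : 0 < k)
    (z : Fin ℓ → Fin k) (T : ℕ) : ∃ m, (baseVal (clexShift j j' m z) < T ↔ baseVal z < T) := by
  have hjj' : j ≠ j' := fun h => by simp [h] at hj'
  obtain ⟨K, rfl⟩ : ∃ K, k = K + 1 := ⟨k - 1, by omega⟩
  have ha : (z j : ℕ) ≤ K := Nat.lt_succ_iff.mp (z j).2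
  have hb : (z j' : ℕ) ≤ K := Nat.lt_succ_iff.mp (z j').2
  have hP : 0 < (K + 1) ^ (j : ℕ) := by positivity
  by_cases hz : baseVal z < T
  · refine ⟨0, iff_of_true ?_ hz⟩
    have := baseVal_clexShift hjj' 0 z
    rw [hj', pow_succ] at this
    simp only [Fin.val_zero, zero_mul, add_zero] at this
    nlinarith [Nat.mul_le_mul_left (z j' : ℕ) (Nat.le_mul_of_pos_right ((K + 1) ^ (j : ℕ)) hk)]
  · refine ⟨Fin.last K, iff_of_false ?_ hz⟩
    have := baseVal_clexShift hjj' (Fin.last K) z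
    rw [hj', pow_succ] at this
    simp only [Fin.val_last] at this
    nlinarith [Nat.mul_le_mul_right ((K + 1) ^ (j : ℕ)) ha,
      Nat.mul_le_mul_right ((K + 1) ^ (j : ℕ) * K) hb]

lemma card_clexShift_crossing_le (hj' : (j' : ℕ) = j + 1) (T : ℕ) :
    #{p : (Fin ℓ → Fin k) × Fin k | baseVal p.1 < T ↔ T ≤ baseVal (clexShift j j' p.2 p.1)} ≤
      (k - 1) * k ^ ((j : ℕ) + 2) := by
  rcases Nat.eq_zero_or_pos k with rfl | hk
  · simp
  set c := (j : ℕ) + 2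
  calc _ ≤ (k - 1) * #{z : Fin ℓ → Fin k | baseVal z / k ^ c = (T - 1) / k ^ c} := by
        refine card_le_mul_card_image_of_maps_to (f := Prod.fst) (fun p hp => ?_) _ fun z _ => ?_
        · refine mem_filter.mpr ⟨mem_univ _, baseVal_div_pow_eq_of_crossing hk (fun i hi => ?_)
            (mem_filter.mp hp).2⟩
          rw [clexShift_apply_of_ne] <;> exact fun h => by simp [h] at hi; omega
        · obtain ⟨m₀, hm₀⟩ := exists_baseVal_clexShift_lt_iff hj' hk z T
          calc _ ≤ #((univ : Finset (Fin k)).erase m₀) := by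
                refine card_le_card_of_injOn Prod.snd (fun p hp => ?_) fun p hp q hq hpq => ?_
                · obtain ⟨hcross, rfl⟩ := mem_filter.mp hp
                  refine mem_erase.mpr ⟨fun h => ?_, mem_univ _⟩
                  have := (mem_filter.mp hcross).2
                  rw [h, ← not_lt, ← hm₀] at this
                  exact iff_not_self this
                · exact Prod.ext (((mem_filter.mp hp).2).trans ((mem_filter.mp hq).2).symm) hpq
            _ = k - 1 := by simp
    _ ≤ (k - 1) * k ^ c := Nat.mul_le_mul_left _ (card_baseVal_div_pow_eq_le hk c _)

lemma sum_sum_ite_eq_clexShift_le (Y Z : Finset (Fin ℓ → Fin k)) :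
    ∑ u ∈ Y, ∑ w ∈ Z, (if u = clexShift j j' (u j') w then 1 else 0 : ℝ) ≤
      #{p : (Fin ℓ → Fin k) × Fin k | p.1 ∈ Z ∧ clexShift j j' p.2 p.1 ∈ Y} := by
  rw [← sum_product' (f := fun u w => if u = clexShift j j' (u j') w then (1 : ℝ) else 0),
    sum_boole]
  refine Nat.cast_le.mpr (card_le_card_of_injOn (fun p => (p.2, p.1 j')) (fun p hp => ?_)
    fun p hp q hq hpq => ?_)
  · obtain ⟨hp, hshift⟩ := mem_filter.mp hp
    obtain ⟨hu, hw⟩ := mem_product.mp hp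
    exact mem_filter.mpr ⟨mem_univ _, hw, hshift ▸ hu⟩
  · obtain ⟨hw, hu⟩ := Prod.ext_iff.mp hpq
    refine Prod.ext ?_ hw
    rw [(mem_filter.mp hp).2, (mem_filter.mp hq).2]
    simp only at hw hu
    rw [hw, hu]

lemma sum_cut_clexShiftCount_le (hj' : (j' : ℕ) = j + 1) (T : ℕ) :
    ∑ u ∈ (initSeg T : Finset (Fin ℓ → Fin k)), ∑ w ∈ (initSeg T)ᶜ, clexShiftCount j j' u w ≤
      ((k - 1) * k ^ ((j : ℕ) + 2) : ℕ) := by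
  set X : Finset (Fin ℓ → Fin k) := initSeg T
  have hcross : #{p : (Fin ℓ → Fin k) × Fin k | p.1 ∈ Xᶜ ∧ clexShift j j' p.2 p.1 ∈ X} +
      #{p : (Fin ℓ → Fin k) × Fin k | p.1 ∈ X ∧ clexShift j j' p.2 p.1 ∈ Xᶜ} ≤
      (k - 1) * k ^ ((j : ℕ) + 2) := by
    rw [← card_union_of_disjoint (disjoint_filter.mpr fun p _ h h' => mem_compl.mp h.1 h'.1),
      ← filter_or]
    refine le_trans (le_of_eq (congrArg card (filter_congr fun p _ => ?_))) (card_clexShift_crossing_le hj' T)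
    simp only [X, mem_compl, mem_initSeg, not_lt]
    omega
  calc _ = ∑ u ∈ X, ∑ w ∈ Xᶜ, (if u = clexShift j j' (u j') w then 1 else 0 : ℝ) +
        ∑ w ∈ Xᶜ, ∑ u ∈ X, (if w = clexShift j j' (w j') u then 1 else 0 : ℝ) := by
        simp only [clexShiftCount, sum_add_distrib]
        exact congrArg _ sum_comm
    _ ≤ _ := add_le_add (sum_sum_ite_eq_clexShift_le _ _) (sum_sum_ite_eq_clexShift_le _ _)
    _ ≤ _ := by exact_mod_cast hcross

lemma clexMat_summand_le_clexShiftCount (hj' : (j' : ℕ) = j + 1) (u w : Fin ℓ → Fin k) :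
    (if ∀ m : Fin ℓ, (m : ℕ) < j → u m = w m then 1 else 0) *
        ((if u j = w j' then 1 else 0) + (if u j' = w j then 1 else 0) : ℝ) *
        (if ∀ m : Fin ℓ, (j : ℕ) + 1 < m → u m = w m then 1 else 0) ≤
      clexShiftCount j j' u w := by
  by_cases hlo : ∀ m : Fin ℓ, (m : ℕ) < j → u m = w m
  swap
  · rw [if_neg hlo, zero_mul, zero_mul, clexShiftCount]; positivity
  by_cases hhi : ∀ m : Fin ℓ, (j : ℕ) + 1 < m → u m = w m
  swap
  · rw [if_neg hhi, mul_zero, clexShiftCount]; positivity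
  have hout (i : Fin ℓ) (hij : i ≠ j) (hij' : i ≠ j') : u i = w i := by
    rcases lt_or_gt_of_ne (Fin.val_ne_of_ne hij) with h | h
    · exact hlo i h
    · exact hhi i (by have := Fin.val_ne_of_ne hij'; omega)
  rw [if_pos hlo, if_pos hhi, one_mul, mul_one, clexShiftCount]
  gcongr
  · split_ifs with h₁ h₂
    exacts [le_rfl, absurd (eq_clexShift_of_eq hout h₁) h₂, zero_le_one, le_rfl]
  · split_ifs with h₁ h₂
    exacts [le_rfl, absurd (eq_clexShift_of_eq (fun i hi hi' => (hout i hi hi').symm) h₁.symm) h₂,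
      zero_le_one, le_rfl]

end clexShift

lemma sum_cut_adj_le (A : Matrix (Fin k) (Fin k) ℝ) (hA : ∀ a b, A a b ≤ 1) (hℓ : 0 < ℓ)
    (T : ℕ) :
    ∑ u ∈ (initSeg T : Finset (Fin ℓ → Fin k)), ∑ w ∈ (initSeg T)ᶜ,
      A (u ⟨0, hℓ⟩) (w ⟨0, hℓ⟩) * (if ∀ m : Fin ℓ, 0 < (m : ℕ) → u m = w m then 1 else 0) ≤
      ((k ^ 2 : ℕ) : ℝ) := by
  set i₀ : Fin ℓ := ⟨0, hℓ⟩
  set X : Finset (Fin ℓ → Fin k) := initSeg T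
  set P : (Fin ℓ → Fin k) → (Fin ℓ → Fin k) → Prop :=
    fun u w => ∀ m : Fin ℓ, 0 < (m : ℕ) → u m = w m
  set D : Finset (Fin ℓ → Fin k) := {z | baseVal z / k ^ 1 = (T - 1) / k ^ 1}
  have hQ : #{p ∈ X ×ˢ Xᶜ | P p.1 p.2} ≤ #(D ×ˢ (univ : Finset (Fin k))) := by
    refine card_le_card_of_injOn (fun p => (p.1, p.2 i₀)) (fun p hp => ?_) fun p hp q hq hpq => ?_
    · obtain ⟨hp, hP⟩ := mem_filter.mp hp
      obtain ⟨hu, hw⟩ := mem_product.mp hp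
      rw [mem_initSeg] at hu
      rw [mem_compl, mem_initSeg, not_lt] at hw
      exact mem_product.mpr ⟨mem_filter.mpr ⟨mem_univ _, baseVal_div_pow_eq_of_crossing
        (p.1 i₀).pos hP (iff_of_true hu hw)⟩, mem_univ _⟩
    · obtain ⟨hu, hw⟩ := Prod.ext_iff.mp hpq
      simp only at hu hw
      refine Prod.ext hu (funext fun i => ?_)
      rcases Nat.eq_zero_or_pos i with hi | hi
      · rwa [show i = i₀ from Fin.ext hi]
      · rw [← (mem_filter.mp hp).2 i hi, ← (mem_filter.mp hq).2 i hi, hu]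
  have hD : #(D ×ˢ (univ : Finset (Fin k))) ≤ k ^ 2 := by
    rw [card_product, card_univ, Fintype.card_fin, sq]
    rcases Nat.eq_zero_or_pos k with rfl | hk
    · simp
    · exact Nat.mul_le_mul_right k ((card_baseVal_div_pow_eq_le hk 1 _).trans_eq (pow_one k))
  calc _ ≤ ∑ u ∈ X, ∑ w ∈ Xᶜ, (if P u w then 1 else 0 : ℝ) :=
        sum_le_sum fun u _ => sum_le_sum fun w _ => by split_ifs <;> simp [hA]
    _ = #{p ∈ X ×ˢ Xᶜ | P p.1 p.2} := by
        rw [← sum_product' (f := fun u w => if P u w then (1 : ℝ) else 0), sum_boole]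
    _ ≤ ((k ^ 2 : ℕ) : ℝ) := by exact_mod_cast hQ.trans hD

lemma clexMat_le (A : Matrix (Fin k) (Fin k) ℝ) (hℓ : 0 < ℓ) (u w : Fin ℓ → Fin k) :
    clexMat A ℓ u w ≤
      A (u ⟨0, hℓ⟩) (w ⟨0, hℓ⟩) * (if ∀ m : Fin ℓ, 0 < (m : ℕ) → u m = w m then 1 else 0) +
        ∑ j : Fin ℓ, if h : (j : ℕ) + 1 < ℓ then clexShiftCount j ⟨j + 1, h⟩ u w else 0 := by
  rw [clexMat, dif_pos hℓ]
  gcongr with j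
  by_cases h : (j : ℕ) + 1 < ℓ
  · rw [dif_pos h, dif_pos h]
    exact clexMat_summand_le_clexShiftCount (j' := ⟨j + 1, h⟩) rfl u w
  · rw [dif_neg h, dif_neg h]

lemma sq_add_sum_pow_eq (hℓ : 0 < ℓ) :
    k ^ 2 + ∑ j : Fin ℓ, (if (j : ℕ) + 1 < ℓ then (k - 1) * k ^ ((j : ℕ) + 2) else 0) =
      k ^ (ℓ + 1) := by
  obtain ⟨L, rfl⟩ : ∃ L, ℓ = L + 1 := ⟨ℓ - 1, by omega⟩
  simp only [Fin.sum_univ_castSucc, Fin.val_castSucc, Fin.val_last, add_lt_add_iff_right,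
    Fin.is_lt, if_true, lt_irrefl, if_false, add_zero]
  rw [Fin.sum_univ_eq_sum_range (fun i => (k - 1) * k ^ (i + 2))]
  clear hℓ
  induction L with
  | zero => simp
  | succ L ih =>
    rw [sum_range_succ, ← add_assoc, ih]
    rcases k with _ | K
    · simp
    · simp only [add_tsub_cancel_right]
      ring

lemma sum_cut_clexMat_le (A : Matrix (Fin k) (Fin k) ℝ) (hA : ∀ a b, A a b ≤ 1) (hℓ : 0 < ℓ)
    (T : ℕ) :
    ∑ u ∈ (initSeg T : Finset (Fin ℓ → Fin k)), ∑ w ∈ (initSeg T)ᶜ, clexMat A ℓ u w ≤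
      (k : ℝ) ^ (ℓ + 1) := by
  set X : Finset (Fin ℓ → Fin k) := initSeg T
  have hshift (j : Fin ℓ) :
      ∑ u ∈ X, ∑ w ∈ Xᶜ, (if h : (j : ℕ) + 1 < ℓ then clexShiftCount j ⟨j + 1, h⟩ u w else 0) ≤
        ((if (j : ℕ) + 1 < ℓ then (k - 1) * k ^ ((j : ℕ) + 2) else 0 : ℕ) : ℝ) := by
    by_cases h : (j : ℕ) + 1 < ℓ
    · simp only [dif_pos h, if_pos h]
      exact sum_cut_clexShiftCount_le rfl T
    · simp [dif_neg h, if_neg h]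
  calc _ ≤ ∑ u ∈ X, ∑ w ∈ Xᶜ,
          (A (u ⟨0, hℓ⟩) (w ⟨0, hℓ⟩) * (if ∀ m : Fin ℓ, 0 < (m : ℕ) → u m = w m then 1 else 0) +
            ∑ j : Fin ℓ, if h : (j : ℕ) + 1 < ℓ then clexShiftCount j ⟨j + 1, h⟩ u w else 0) :=
        sum_le_sum fun u _ => sum_le_sum fun w _ => clexMat_le A hℓ u w
    _ = ∑ u ∈ X, ∑ w ∈ Xᶜ,
          A (u ⟨0, hℓ⟩) (w ⟨0, hℓ⟩) * (if ∀ m : Fin ℓ, 0 < (m : ℕ) → u m = w m then 1 else 0) +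
        ∑ j : Fin ℓ, ∑ u ∈ X, ∑ w ∈ Xᶜ,
          if h : (j : ℕ) + 1 < ℓ then clexShiftCount j ⟨j + 1, h⟩ u w else 0 := by
        simp only [sum_add_distrib]
        congr 1
        simp_rw [sum_comm (s := Xᶜ) (t := univ)]
        exact sum_comm
    _ ≤ ((k ^ 2 : ℕ) : ℝ) + ∑ j : Fin ℓ,
          ((if (j : ℕ) + 1 < ℓ then (k - 1) * k ^ ((j : ℕ) + 2) else 0 : ℕ) : ℝ) :=
        add_le_add (sum_cut_adj_le A hA hℓ T) (sum_le_sum fun j _ => hshift j)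
    _ = (k : ℝ) ^ (ℓ + 1) := by exact_mod_cast sq_add_sum_pow_eq hℓ

end ClexBisection

theorem clex_bisection_bound_general {k ℓ : ℕ} (G : SimpleGraph (Fin k)) (hl : 3 ≤ ℓ) :
    ∃ X : Finset (Fin ℓ → Fin k), X.card = k ^ ℓ / 2 ∧
      ∑ u ∈ X, ∑ w ∈ Xᶜ, clexMat (G.adjMatrix ℝ) ℓ u w ≤ (k : ℝ) ^ (ℓ + 1) := by
  have hadj (a b : Fin k) : G.adjMatrix ℝ a b ≤ 1 := by
    rw [SimpleGraph.adjMatrix_apply]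
    split_ifs <;> norm_num
  exact ⟨ClexBisection.initSeg (k ^ ℓ / 2), ClexBisection.card_initSeg (Nat.div_le_self _ _),
    ClexBisection.sum_cut_clexMat_le _ hadj (by omega) _⟩

/-- Let `G` be a connected `t`-regular graph on `k` vertices and `ℓ ≥ 3`.  Then the
bisection bandwidth of the generalized CLEX multigraph `C(G,ℓ)` is at most `k^{ℓ+1}`:
there is a set `X` of `⌊k^ℓ/2⌋` vertices with `𝟙_Xᵀ A 𝟙_{Xᶜ} ≤ k^{ℓ+1}`. -/
theorem clex_bisection_bound {k t ℓ : ℕ} (G : SimpleGraph (Fin k))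
    (hG : G.Connected) (hreg : G.IsRegularOfDegree t) (hl : 3 ≤ ℓ) :
    ∃ X : Finset (Fin ℓ → Fin k), X.card = k ^ ℓ / 2 ∧
      ∑ u ∈ X, ∑ w ∈ Xᶜ, clexMat (G.adjMatrix ℝ) ℓ u w ≤ (k : ℝ) ^ (ℓ + 1) :=
  clex_bisection_bound_general G hl
end

section
/- Let G be a connected d-regular graph, H a connected r-regular graph on t·d vertices, and let 𝒢 = G ⇝_k H be any k-fold G-connected-H graph. If λ₂ denotes the second-largest adjacency eigenvalue of G, then the algebraic connectivity of 𝒢 satisfies ρ₂(𝒢) ≤ k − k·λ₂/d. -/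
open scoped Classical

/-- Algebraic connectivity: second smallest Laplacian eigenvalue. -/
noncomputable def algConn {V : Type*} [Fintype V] [DecidableEq V]
    (G : SimpleGraph V) : ℝ :=
  (eigList (G.lapMatrix ℝ)).getD 1 0

/-- The second largest adjacency eigenvalue of a graph. -/
noncomputable def secondLargestAdjEig {V : Type*} [Fintype V] [DecidableEq V]
    (G : SimpleGraph V) : ℝ :=
  (eigList (G.adjMatrix ℝ)).getD (Fintype.card V - 2) 0

/-- `calG` is a `k`-fold `G`-connected-`H` graph (with `H` on `t·d` vertices, `d` the
degree of `G`): the induced subgraph on each copy `{g} × V_H` is isomorphic to `H`; the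
remaining ("matching") edges form a `k`-regular graph; and the number of matching edges
between two distinct copies is `k·t` if the copies are adjacent in `G` and `0`
otherwise. -/
structure IsGConnH {VG VH : Type*} [Fintype VG] [Fintype VH]
    (G : SimpleGraph VG) (H : SimpleGraph VH) (k t : ℕ)
    (calG : SimpleGraph (VG × VH)) : Prop where
  copy_iso : ∀ g : VG, Nonempty (H ≃g (calG.induce {p : VG × VH | p.1 = g}))
  cross_regular : ∀ p : VG × VH,
    ((Finset.univ : Finset (VG × VH)).filter
        (fun q => q.1 ≠ p.1 ∧ calG.Adj p q)).card = k
  cross_count : ∀ v v' : VG, v ≠ v' →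
    ((Finset.univ : Finset (VH × VH)).filter
        (fun e => calG.Adj (v, e.1) (v', e.2))).card =
      if G.Adj v v' then k * t else 0


/-!
Take `f ≠ 0` orthogonal to the constants in the span of the two leading eigenvectors of `A(G)`, so
that `fᵀ A(G) f ≥ λ₂ ‖f‖²`, and lift it to `x (g, h) = f g`. Then `x` is orthogonal to the constants
of `𝒢`, the edges inside a copy of `H` do not see `x`, and each edge of `G` is carried by `k t`
matching edges, so `xᵀ L(𝒢) x = k t · fᵀ L(G) f ≤ k t (d - λ₂) ‖f‖²` while `‖x‖² = t d ‖f‖²`.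
As `ρ₂(𝒢)` bounds the Rayleigh quotient of `L(𝒢)` from below on the orthogonal complement of its
kernel vector `1`, `ρ₂(𝒢) ≤ k (d - λ₂) / d`.
-/

open Matrix
open scoped RealInnerProductSpace

namespace LinearMap.IsSymmetric

variable {E : Type*} [NormedAddCommGroup E] [InnerProductSpace ℝ E] [FiniteDimensional ℝ E]
  {T : E →ₗ[ℝ] E} {n : ℕ}

theorem inner_map_self_eq_sum (hT : T.IsSymmetric) (hn : Module.finrank ℝ E = n) (x : E) :
    ⟪T x, x⟫ = ∑ i, hT.eigenvalues hn i * ⟪hT.eigenvectorBasis hn i, x⟫ ^ 2 := by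
  rw [← (hT.eigenvectorBasis hn).sum_inner_mul_inner]
  refine Finset.sum_congr rfl fun i _ => ?_
  rw [hT, apply_eigenvectorBasis, real_inner_smul_right, real_inner_comm x]
  simp only [RCLike.ofReal_real_eq_id, id_eq]
  ring

theorem mul_norm_sq_le_inner_map_self (hT : T.IsSymmetric) (hn : Module.finrank ℝ E = n)
    {μ : ℝ} {x : E} (hx : ∀ i, ⟪hT.eigenvectorBasis hn i, x⟫ ≠ 0 → μ ≤ hT.eigenvalues hn i) :
    μ * ‖x‖ ^ 2 ≤ ⟪T x, x⟫ := by
  rw [← (hT.eigenvectorBasis hn).sum_sq_inner_right, Finset.mul_sum, hT.inner_map_self_eq_sum hn]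
  refine Finset.sum_le_sum fun i _ => ?_
  by_cases hi : ⟪hT.eigenvectorBasis hn i, x⟫ = 0
  · simp [hi]
  · exact mul_le_mul_of_nonneg_right (hx i hi) (sq_nonneg _)

theorem exists_inner_eq_zero_eigenvalues_mul_norm_sq_le (hT : T.IsSymmetric)
    (hn : Module.finrank ℝ E = n) (w : E) {i j : Fin n} (hij : i < j) :
    ∃ x ≠ 0, ⟪w, x⟫ = 0 ∧ hT.eigenvalues hn j * ‖x‖ ^ 2 ≤ ⟪T x, x⟫ := by
  set b := hT.eigenvectorBasis hn
  obtain ⟨α, β, hαβ, hw⟩ :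
      ∃ α β : ℝ, (α ≠ 0 ∨ β ≠ 0) ∧ α * ⟪w, b i⟫ + β * ⟪w, b j⟫ = 0 := by
    by_cases h : ⟪w, b i⟫ = 0
    · exact ⟨1, 0, by simp, by simp [h]⟩
    · exact ⟨⟪w, b j⟫, -⟪w, b i⟫, Or.inr (neg_ne_zero.mpr h), by ring⟩
  have hcoef (k : Fin n) :
      ⟪b k, α • b i + β • b j⟫ = (if k = i then α else 0) + if k = j then β else 0 := by
    simp only [inner_add_right, real_inner_smul_right, orthonormal_iff_ite.mp b.orthonormal]
    split_ifs <;> simp_all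
  refine ⟨α • b i + β • b j, fun h0 => ?_, ?_, hT.mul_norm_sq_le_inner_map_self hn fun k hk => ?_⟩
  · have hi := hcoef i
    have hj := hcoef j
    simp only [h0, inner_zero_right, if_true, hij.ne, hij.ne', if_false, add_zero,
      zero_add] at hi hj
    exact hαβ.elim (· hi.symm) (· hj.symm)
  · rw [inner_add_right, real_inner_smul_right, real_inner_smul_right]
    linarith
  · have hk' : k = i ∨ k = j := by
      by_contra! h
      rw [hcoef, if_neg h.1, if_neg h.2, add_zero] at hk
      exact hk rfl
    rcases hk' with rfl | rfl
    · exact hT.eigenvalues_antitone hn hij.le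
    · exact le_rfl

theorem eigenvalues_mul_norm_sq_le_of_inner_eq_zero (hT : T.IsSymmetric)
    (hn : Module.finrank ℝ E = n) {μ : ℝ} (hμ : ∀ k, μ ≤ hT.eigenvalues hn k) {w : E}
    (hw : w ≠ 0) (hTw : T w = μ • w) {x : E} (hwx : ⟪w, x⟫ = 0) (i : Fin n)
    (hi : (i : ℕ) + 2 = n) : hT.eigenvalues hn i * ‖x‖ ^ 2 ≤ ⟪T x, x⟫ := by
  set b := hT.eigenvectorBasis hn
  set last : Fin n := ⟨i + 1, by omega⟩
  have hle (k : Fin n) (hk : k ≠ last) : hT.eigenvalues hn i ≤ hT.eigenvalues hn k := by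
    rw [Ne, Fin.ext_iff] at hk
    exact hT.eigenvalues_antitone hn (Fin.le_def.mpr (by simp only [last] at hk; omega))
  rcases le_or_gt (hT.eigenvalues hn i) μ with hiμ | hμi
  · exact hT.mul_norm_sq_le_inner_map_self hn fun k _ => hiμ.trans (hμ k)
  -- As `μ < λᵢ`, only the last eigenvector can have a component along `w`.
  have hwk (k : Fin n) (hk : k ≠ last) : ⟪b k, w⟫ = 0 := by
    have h : hT.eigenvalues hn k * ⟪b k, w⟫ = μ * ⟪b k, w⟫ :=
      calc hT.eigenvalues hn k * ⟪b k, w⟫ = ⟪T (b k), w⟫ := by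
            rw [apply_eigenvectorBasis, real_inner_smul_left]; rfl
        _ = ⟪b k, T w⟫ := hT _ _
        _ = μ * ⟪b k, w⟫ := by rw [hTw, real_inner_smul_right]
    have hsub : (hT.eigenvalues hn k - μ) * ⟪b k, w⟫ = 0 := by rw [sub_mul]; linarith
    exact (mul_eq_zero.mp hsub).resolve_left (by linarith [hle k hk])
  have hwl : ⟪b last, w⟫ ≠ 0 := by
    intro h
    apply hw
    rw [← b.sum_repr' w]
    refine Finset.sum_eq_zero fun k _ => ?_
    by_cases hk : k = last
    · simp [hk, h]
    · simp [hwk k hk]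
  have hxl : ⟪b last, x⟫ = 0 := by
    rw [← b.sum_inner_mul_inner, Finset.sum_eq_single last
      (fun k _ hk => by rw [real_inner_comm, hwk k hk, zero_mul]) (by simp),
      real_inner_comm] at hwx
    exact (mul_eq_zero.mp hwx).resolve_left hwl
  exact hT.mul_norm_sq_le_inner_map_self hn fun k hk => hle k (by rintro rfl; exact hk hxl)

end LinearMap.IsSymmetric

namespace Matrix

variable {V : Type*} [Fintype V] [DecidableEq V] {A : Matrix V V ℝ}

theorem IsHermitian.eigList_eq_reverse_ofFn (hA : A.IsHermitian) :
    eigList A = (List.ofFn hA.eigenvalues₀).reverse := by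
  have hmap : Finset.univ.val.map hA.eigenvalues = Finset.univ.val.map hA.eigenvalues₀ := by
    rw [← Multiset.map_univ_val_equiv (Fintype.equivOfCardEq (Fintype.card_fin _)),
      Multiset.map_map]
    simp [Function.comp_def, IsHermitian.eigenvalues]
  rw [eigList, dif_pos hA, hmap, Fin.univ_val_map, ← Multiset.coe_reverse, Multiset.coe_sort]
  apply List.mergeSort_of_pairwise
  rw [List.pairwise_reverse]
  simpa using hA.eigenvalues₀_antitone.sortedGE_ofFn.pairwise

theorem IsHermitian.eigList_getD (hA : A.IsHermitian) {i : ℕ} (hi : i < Fintype.card V) :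
    (eigList A).getD i 0 = hA.eigenvalues₀ ⟨Fintype.card V - 1 - i, by omega⟩ := by
  rw [hA.eigList_eq_reverse_ofFn, List.getD_eq_getElem _ _ (by simpa using hi),
    List.getElem_reverse, List.getElem_ofFn]
  simp

theorem IsHermitian.exists_dotProduct_eq_zero_eigenvalues₀_mul_le (hA : A.IsHermitian)
    (w : V → ℝ) {i j : Fin (Fintype.card V)} (hij : i < j) :
    ∃ x ≠ 0, w ⬝ᵥ x = 0 ∧ hA.eigenvalues₀ j * (x ⬝ᵥ x) ≤ x ⬝ᵥ (A *ᵥ x) := by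
  obtain ⟨x, hx0, hwx, hx⟩ := (isSymmetric_toEuclideanLin_iff.mpr hA)
    |>.exists_inner_eq_zero_eigenvalues_mul_norm_sq_le finrank_euclideanSpace (WithLp.toLp 2 w) hij
  refine ⟨x.ofLp, by simpa using hx0, ?_, ?_⟩
  · simpa [EuclideanSpace.inner_eq_star_dotProduct, dotProduct_comm] using hwx
  · rw [← real_inner_self_eq_norm_sq, EuclideanSpace.inner_eq_star_dotProduct,
      EuclideanSpace.inner_eq_star_dotProduct] at hx
    simp only [toLpLin_apply, star_trivial] at hx
    exact hx

theorem PosSemidef.eigenvalues₀_mul_le_of_dotProduct_eq_zero (hA : A.PosSemidef) {w : V → ℝ}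
    (hw : w ≠ 0) (hAw : A *ᵥ w = 0) {x : V → ℝ} (hwx : w ⬝ᵥ x = 0) (i : Fin (Fintype.card V))
    (hi : (i : ℕ) + 2 = Fintype.card V) :
    hA.1.eigenvalues₀ i * (x ⬝ᵥ x) ≤ x ⬝ᵥ (A *ᵥ x) := by
  have hμ (k : Fin (Fintype.card V)) : 0 ≤ hA.1.eigenvalues₀ k := by
    simpa [IsHermitian.eigenvalues] using
      hA.eigenvalues_nonneg (Fintype.equivOfCardEq (Fintype.card_fin _) k)
  have h := (isSymmetric_toEuclideanLin_iff.mpr hA.1).eigenvalues_mul_norm_sq_le_of_inner_eq_zero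
    finrank_euclideanSpace hμ (w := WithLp.toLp 2 w) (by simpa using hw)
    (by simp [toLpLin_apply, hAw]) (x := WithLp.toLp 2 x)
    (by simpa [EuclideanSpace.inner_eq_star_dotProduct, dotProduct_comm] using hwx) i hi
  rw [← real_inner_self_eq_norm_sq, EuclideanSpace.inner_eq_star_dotProduct,
    EuclideanSpace.inner_eq_star_dotProduct] at h
  simp only [toLpLin_apply, star_trivial] at h
  exact h

end Matrix

section Graph

variable {V W : Type*} [Fintype V] [Fintype W]

theorem dotProduct_comp_fst {R : Type*} [Semiring R] (f g : V → R) :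
    (fun p : V × W => f p.1) ⬝ᵥ (fun p => g p.1) = Fintype.card W * (f ⬝ᵥ g) := by
  simp [dotProduct, Fintype.sum_prod_type, Finset.mul_sum]

variable [DecidableEq V] [DecidableEq W]

theorem algConn_eq_eigenvalues₀ (G : SimpleGraph V) (hV : 2 ≤ Fintype.card V) :
    algConn G = (G.isHermitian_lapMatrix ℝ).eigenvalues₀ ⟨Fintype.card V - 2, by omega⟩ := by
  rw [algConn, (G.isHermitian_lapMatrix ℝ).eigList_getD (by omega)]
  rfl

theorem secondLargestAdjEig_eq_eigenvalues₀ (G : SimpleGraph V) (hV : 2 ≤ Fintype.card V) :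
    secondLargestAdjEig G = (G.isHermitian_adjMatrix ℝ).eigenvalues₀ ⟨1, by omega⟩ := by
  rw [secondLargestAdjEig, (G.isHermitian_adjMatrix ℝ).eigList_getD (by omega)]
  congr
  omega

theorem SimpleGraph.IsRegularOfDegree.dotProduct_lapMatrix_mulVec {R : Type*} [CommRing R]
    {G : SimpleGraph V} {d : ℕ} (hG : G.IsRegularOfDegree d) (x : V → R) :
    x ⬝ᵥ (G.lapMatrix R *ᵥ x) = d * (x ⬝ᵥ x) - x ⬝ᵥ (G.adjMatrix R *ᵥ x) := by
  rw [SimpleGraph.lapMatrix, sub_mulVec, dotProduct_sub, SimpleGraph.dotProduct_mulVec_degMatrix]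
  simp only [hG _, dotProduct, Finset.mul_sum, mul_assoc]

theorem SimpleGraph.dotProduct_lapMatrix_mulVec_comp_fst {R : Type*} [Field R] [CharZero R]
    (G : SimpleGraph V) (calG : SimpleGraph (V × W)) (c : ℕ)
    (hc : ∀ v v' : V, v ≠ v' →
      ((Finset.univ : Finset (W × W)).filter
        (fun e => calG.Adj (v, e.1) (v', e.2))).card = if G.Adj v v' then c else 0)
    (f : V → R) :
    (fun p : V × W => f p.1) ⬝ᵥ (calG.lapMatrix R *ᵥ fun p => f p.1) =
      c * (f ⬝ᵥ (G.lapMatrix R *ᵥ f)) := by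
  have hblock (v v' : V) : (∑ a : W, ∑ b : W,
      if calG.Adj (v, a) (v', b) then (f v - f v') ^ 2 else 0) =
      c * if G.Adj v v' then (f v - f v') ^ 2 else 0 := by
    rcases eq_or_ne v v' with rfl | hvv
    · simp
    rw [← Fintype.sum_prod_type', ← Finset.sum_filter, Finset.sum_const, hc v v' hvv]
    split_ifs <;> simp
  simp only [← toLinearMap₂'_apply', lapMatrix_toLinearMap₂', Fintype.sum_prod_type]
  rw [mul_div_assoc', Finset.mul_sum]
  congr 1
  refine Finset.sum_congr rfl fun v _ => ?_
  rw [Finset.sum_comm, Finset.mul_sum]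
  exact Finset.sum_congr rfl fun v' _ => hblock v v'

theorem IsGConnH.algConn_mul_le {G : SimpleGraph V} {H : SimpleGraph W} {k t : ℕ}
    {calG : SimpleGraph (V × W)} (hcalG : IsGConnH G H k t calG)
    (hcard : 2 ≤ Fintype.card (V × W)) {f : V → ℝ} (hf : (fun _ => 1) ⬝ᵥ f = 0) :
    algConn calG * (Fintype.card W * (f ⬝ᵥ f)) ≤ (k * t : ℕ) * (f ⬝ᵥ (G.lapMatrix ℝ *ᵥ f)) := by
  obtain ⟨p⟩ := Fintype.card_pos_iff.mp (by omega : 0 < Fintype.card (V × W))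
  have h := (calG.posSemidef_lapMatrix ℝ).eigenvalues₀_mul_le_of_dotProduct_eq_zero
    (fun h => one_ne_zero (congrFun h p)) calG.lapMatrix_mulVec_const_eq_zero
    ((dotProduct_comp_fst (fun _ => (1 : ℝ)) f).trans (by rw [hf, mul_zero]))
    ⟨Fintype.card (V × W) - 2, by omega⟩ (by simp only; omega)
  rwa [← algConn_eq_eigenvalues₀ calG hcard, dotProduct_comp_fst,
    G.dotProduct_lapMatrix_mulVec_comp_fst calG (k * t) hcalG.cross_count] at h

end Graph

theorem gConnH_algConn_bound_general {VG VH : Type*} [Fintype VG] [Fintype VH]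
    [DecidableEq VG] [DecidableEq VH] {d t k : ℕ}
    (G : SimpleGraph VG) (H : SimpleGraph VH)
    (hGconn : G.Connected) (hHconn : H.Connected)
    (hGreg : G.IsRegularOfDegree d)
    (hcard : Fintype.card VH = t * d)
    (calG : SimpleGraph (VG × VH)) (hstruct : IsGConnH G H k t calG) :
    algConn calG ≤ (k : ℝ) - (k : ℝ) * secondLargestAdjEig G / d := by
  obtain ⟨v⟩ := hGconn.nonempty
  obtain ⟨a⟩ := hHconn.nonempty
  have htd : 0 < t * d := hcard ▸ Fintype.card_pos_iff.mpr ⟨a⟩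
  have hd : (0 : ℝ) < d := by exact_mod_cast Nat.pos_of_mul_pos_left htd
  have ht : (0 : ℝ) < t := by exact_mod_cast Nat.pos_of_mul_pos_right htd
  have hVG : 2 ≤ Fintype.card VG := by
    have := hGreg v ▸ G.degree_lt_card_verts v
    have := Nat.pos_of_mul_pos_left htd
    omega
  obtain ⟨f, hf0, hf1, hfA⟩ := (G.isHermitian_adjMatrix ℝ)
    |>.exists_dotProduct_eq_zero_eigenvalues₀_mul_le (fun _ => 1) (i := ⟨0, by omega⟩)
      (j := ⟨1, by omega⟩) (by simp [Fin.lt_def])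
  rw [← secondLargestAdjEig_eq_eigenvalues₀ G hVG] at hfA
  have hρ := hstruct.algConn_mul_le (by rw [Fintype.card_prod]; nlinarith) hf1
  rw [hGreg.dotProduct_lapMatrix_mulVec, hcard] at hρ
  push_cast at hρ
  have hF : 0 < f ⬝ᵥ f := lt_of_le_of_ne (Finset.sum_nonneg fun _ _ => mul_self_nonneg _)
    (Ne.symm (dotProduct_self_eq_zero.not.mpr hf0))
  rw [le_sub_comm, div_le_iff₀ hd]
  refine le_of_mul_le_mul_left ?_ (mul_pos ht hF)
  linarith [mul_le_mul_of_nonneg_left hfA (by positivity : (0 : ℝ) ≤ k * t)]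

/-- Let `G` be a connected `d`-regular graph, `H` a connected `r`-regular graph on
`t·d` vertices, and `𝒢 = G ⇝ₖ H` a `k`-fold `G`-connected-`H` graph.  If `λ₂` is the
second largest adjacency eigenvalue of `G`, then `ρ₂(𝒢) ≤ k − k·λ₂/d`. -/
theorem gConnH_algConn_bound {VG VH : Type*} [Fintype VG] [Fintype VH]
    [DecidableEq VG] [DecidableEq VH] {d r t k : ℕ}
    (G : SimpleGraph VG) (H : SimpleGraph VH)
    (hGconn : G.Connected) (hHconn : H.Connected)
    (hGreg : G.IsRegularOfDegree d) (hHreg : H.IsRegularOfDegree r)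
    (hcard : Fintype.card VH = t * d)
    (calG : SimpleGraph (VG × VH)) (hstruct : IsGConnH G H k t calG) :
    algConn calG ≤ (k : ℝ) - (k : ℝ) * secondLargestAdjEig G / d :=
  gConnH_algConn_bound_general G H hGconn hHconn hGreg hcard calG hstruct
end
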